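/- arXiv:math/0509313 — 2 statements merged into one kernel-verified Lean document; each statement's English description precedes it below -/
import Mathlib

section
/- Let S be a semigroupoid which has a prefix-automatic cross-section, and let T be a finite subset of the arrows of S. Then S has a prefix-automatic cross-section (Y, L, sigma) such that the restriction of sigma to the edges of Y is injective and has image containing T. -/
/- Common framework: graphs, path languages, synchronous regularity,
   semigroupoids, automatic structures, and Rees matrix constructions. -/

namespace AutoRees

/-- Raw data of a semigroupoid: source and target maps on arrows together with a
totalised multiplication (whose values are only meaningful on composable pairs). -/
structure PreSgpd (O A : Type) where
  src : A → O
  tgt : A → O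
  mul : A → A → A

/-- A semigroupoid: the multiplication respects sources and targets and is
associative, on composable pairs. -/
structure Sgpd (O A : Type) extends PreSgpd O A where
  src_mul : ∀ e f, tgt e = src f → src (mul e f) = src e
  tgt_mul : ∀ e f, tgt e = src f → tgt (mul e f) = tgt f
  mul_assoc' : ∀ e f g, tgt e = src f → tgt f = src g →
    mul (mul e f) g = mul e (mul f g)

/-- Evaluate a nonempty word of edge labels as a product in the semigroupoid
(`none` on the empty word). -/
def evalPath? {O A E : Type} (S : PreSgpd O A) (lab : E → A) : List E → Option A
  | [] => none
  | e :: l => some ((l.map lab).foldl S.mul (lab e))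

/-- The consecutive-compatibility condition making a list of edges a path. -/
def IsPathChain {V E : Type} (esrc etgt : E → V) (l : List E) : Prop :=
  List.Chain' (fun e f => etgt e = esrc f) l

/-- The target of a non-empty path. -/
def pathTgt? {V E : Type} (etgt : E → V) (l : List E) : Option V :=
  l.getLast?.map etgt

/-- The source of a non-empty path. -/
def pathSrc? {V E : Type} (esrc : E → V) (l : List E) : Option V :=
  l.head?.map esrc

/-- A set of words is regular if it is a regular language in the usual sense. -/
def IsRegularSet {α : Type} (L : Set (List α)) : Prop :=
  Language.IsRegular (show Language α from L)

/-- The padding symbol used to pad a pair of paths, at the target of `l`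
(the letters of the padded alphabet `X^$` are `Sum.inl` (a genuine edge) or
`Sum.inr (some v)` (the padding edge at vertex `v`)). -/
def padSym {V E : Type} (etgt : E → V) (l : List E) : E ⊕ Option V :=
  Sum.inr (l.getLast?.map etgt)

/-- The padded convolution `(a, b) δ_X` of a pair of paths. -/
def deltaPair {V E : Type} (etgt : E → V) (a b : List E) :
    List ((E ⊕ Option V) × (E ⊕ Option V)) :=
  (a.map Sum.inl).zip (b.map Sum.inl) ++
    (if a.length ≤ b.length
      then (b.drop a.length).map (fun e => (padSym etgt a, Sum.inl e))
      else (a.drop b.length).map (fun e => (Sum.inl e, padSym etgt b)))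

/-- A binary relation on paths is synchronously regular if its image under the
padding map is a regular language over the padded product alphabet. -/
def SyncRegular {V E : Type} (etgt : E → V) (R : Set (List E × List E)) : Prop :=
  IsRegularSet { w | ∃ p ∈ R, w = deltaPair etgt p.1 p.2 }

/-- A choice of representatives `(X, K, ρ)` for a semigroupoid `S`: a graph `X`
with vertex set `S^0` (edge set `E`, source `esrc`, target `etgt`), a semigroupoid
morphism `ρ : X^+ → S` (induced by the edge-labelling `lab`), and a language `K`
of non-empty paths with `K ρ = S^1`. -/
structure ChoiceOfReps {O A : Type} (S : PreSgpd O A) (E : Type) where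
  esrc : E → O
  etgt : E → O
  lab : E → A
  lab_src : ∀ e, S.src (lab e) = esrc e
  lab_tgt : ∀ e, S.tgt (lab e) = etgt e
  K : Set (List E)
  K_path : ∀ l ∈ K, l ≠ [] ∧ IsPathChain esrc etgt l
  K_onto : ∀ a : A, ∃ l ∈ K, evalPath? S lab l = some a

variable {O A E : Type} {S : PreSgpd O A}

/-- The relation `K_=` = {(u,v) ∈ K × K : u ρ = v ρ}. -/
def relEq (C : ChoiceOfReps S E) : Set (List E × List E) :=
  { p | p.1 ∈ C.K ∧ p.2 ∈ C.K ∧ evalPath? S C.lab p.1 = evalPath? S C.lab p.2 }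

/-- The relation `K_a` for an edge `a` of `X`. -/
def relEdge (C : ChoiceOfReps S E) (a : E) : Set (List E × List E) :=
  { p | p.1 ∈ C.K ∧ p.2 ∈ C.K ∧ pathTgt? C.etgt p.1 = some (C.esrc a) ∧
        evalPath? S C.lab (p.1 ++ [a]) = evalPath? S C.lab p.2 }

/-- The relation `K_a` for a vertex `a` of `X` (regarded as the empty path at `a`). -/
def relVertex (C : ChoiceOfReps S E) (v : O) : Set (List E × List E) :=
  { p | p.1 ∈ C.K ∧ p.2 ∈ C.K ∧ pathTgt? C.etgt p.1 = some v ∧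
        evalPath? S C.lab p.1 = evalPath? S C.lab p.2 }

/-- An automatic structure: a finitely generated choice of representatives with
`K` regular such that `K_a` is synchronously regular for every edge and vertex. -/
def IsAutomaticStructure (C : ChoiceOfReps S E) : Prop :=
  Finite E ∧ IsRegularSet C.K ∧
    (∀ a : E, SyncRegular C.etgt (relEdge C a)) ∧
    (∀ v : O, SyncRegular C.etgt (relVertex C v))

/-- The set of non-empty prefixes of words in `K`. -/
def prefs {E : Type} (K : Set (List E)) : Set (List E) :=
  { p | p ≠ [] ∧ ∃ l ∈ K, p <+: l }

/-- The relation `K'_=` = {(u,v) ∈ K × Pref(K) : u ρ = v ρ}. -/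
def relPrefEq (C : ChoiceOfReps S E) : Set (List E × List E) :=
  { p | p.1 ∈ C.K ∧ p.2 ∈ prefs C.K ∧ evalPath? S C.lab p.1 = evalPath? S C.lab p.2 }

/-- A prefix-automatic structure. -/
def IsPrefixAutomaticStructure (C : ChoiceOfReps S E) : Prop :=
  IsAutomaticStructure C ∧ SyncRegular C.etgt (relPrefEq C)

/-- A cross-section: `ρ` restricted to `K` is injective. -/
def IsCrossSection (C : ChoiceOfReps S E) : Prop :=
  ∀ u ∈ C.K, ∀ v ∈ C.K, evalPath? S C.lab u = evalPath? S C.lab v → u = v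

/-- `K` is closed under taking non-empty prefixes. -/
def IsPrefixClosed (C : ChoiceOfReps S E) : Prop :=
  ∀ l ∈ C.K, ∀ p : List E, p ≠ [] → p <+: l → p ∈ C.K

/-- A semigroupoid (or semigroup, in the one-object case) is automatic if it
admits an automatic structure. -/
def IsAutomatic (S : PreSgpd O A) : Prop :=
  ∃ (E : Type) (C : ChoiceOfReps S E), IsAutomaticStructure C

/-- Prefix-automaticity. -/
def IsPrefixAutomatic (S : PreSgpd O A) : Prop :=
  ∃ (E : Type) (C : ChoiceOfReps S E), IsPrefixAutomaticStructure C

/-- Finite generation: every arrow is a (composable) product of arrows from some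
fixed finite set. -/
def IsFG (S : PreSgpd O A) : Prop :=
  ∃ T : Set A, T.Finite ∧ ∀ a : A, ∃ l : List A, l ≠ [] ∧ (∀ x ∈ l, x ∈ T) ∧
    IsPathChain S.src S.tgt l ∧ evalPath? S id l = some a

/-- An arrow is an identity if it acts as an identity on all composable products. -/
def IsIdentity (S : PreSgpd O A) (e : A) : Prop :=
  (∀ x, S.tgt e = S.src x → S.mul e x = x) ∧ (∀ y, S.tgt y = S.src e → S.mul y e = y)

/-- A small category is a semigroupoid with an identity arrow at every object. -/
def IsSmallCategory (S : PreSgpd O A) : Prop :=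
  ∀ v : O, ∃ e : A, S.src e = v ∧ S.tgt e = v ∧ IsIdentity S e

/-- No object is isolated. -/
def IsolationFree (S : PreSgpd O A) : Prop :=
  ∀ v : O, ∃ a : A, S.src a = v ∨ S.tgt a = v

namespace Rees

variable {O A I Λ : Type}

/-- A triple `(i, x, λ)` is valid if `i F = x α` and `x ω = λ G`. -/
def Valid (S : Sgpd O A) (F : I → O) (G : Λ → O) (t : I × A × Λ) : Prop :=
  F t.1 = S.src t.2.1 ∧ S.tgt t.2.1 = G t.2.2

/-- The set of valid Rees triples. -/
def Triples (S : Sgpd O A) (F : I → O) (G : Λ → O) : Type :=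
  { t : I × A × Λ // Valid S F G t }

theorem prod_valid (S : Sgpd O A) {F : I → O} {G : Λ → O}
    {i : I} {x : A} {lam : Λ} {j : I} {y : A} {mu : Λ} {p : A}
    (hx : Valid S F G (i, x, lam)) (hy : Valid S F G (j, y, mu))
    (hps : S.src p = G lam) (hpt : S.tgt p = F j) :
    Valid S F G (i, S.mul (S.mul x p) y, mu) := by
  obtain ⟨hx1, hx2⟩ := hx
  obtain ⟨hy1, hy2⟩ := hy
  have h1 : S.tgt x = S.src p := by rw [hps]; exact hx2
  have h2 : S.tgt p = S.src y := by rw [hpt]; exact hy1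
  have h3 : S.tgt (S.mul x p) = S.src y := by rw [S.tgt_mul x p h1]; exact h2
  constructor
  · show F i = S.src (S.mul (S.mul x p) y)
    rw [S.src_mul _ y h3, S.src_mul x p h1]; exact hx1
  · show S.tgt (S.mul (S.mul x p) y) = G mu
    rw [S.tgt_mul _ y h3]; exact hy2

/-- Data for a Rees matrix construction with zero over a semigroupoid `S`:
indexing functions `F`, `G` surjective onto the sets of sources and of targets
respectively, and a sandwich matrix `P` with entries in `S^1 ∪ {0}`
(`none` representing `0`) compatible with `F` and `G`. -/
structure Data0 (S : Sgpd O A) (I Λ : Type) where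
  F : I → O
  G : Λ → O
  P : Λ → I → Option A
  F_into : ∀ i, ∃ a : A, S.src a = F i
  F_onto : ∀ a : A, ∃ i, F i = S.src a
  G_into : ∀ lam, ∃ a : A, S.tgt a = G lam
  G_onto : ∀ a : A, ∃ lam, G lam = S.tgt a
  P_src : ∀ lam i p, P lam i = some p → S.src p = G lam
  P_tgt : ∀ lam i p, P lam i = some p → S.tgt p = F i

/-- Underlying set of the Rees matrix semigroup with zero (`none` is the zero). -/
def Carrier0 (S : Sgpd O A) (R : Data0 S I Λ) : Type :=
  Option (Triples S R.F R.G)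

/-- Multiplication of the Rees matrix semigroup with zero. -/
def mul0 (S : Sgpd O A) (R : Data0 S I Λ) :
    Carrier0 S R → Carrier0 S R → Carrier0 S R
  | some ⟨(i, x, lam), hx⟩, some ⟨(j, y, mu), hy⟩ =>
    match hp : R.P lam j with
    | some p => some ⟨(i, S.mul (S.mul x p) y, mu),
        prod_valid S hx hy (R.P_src lam j p hp) (R.P_tgt lam j p hp)⟩
    | none => none
  | none, _ => none
  | _, none => none

/-- The Rees matrix semigroup with zero `M^0(S; F(I), G(Λ); P)`, as a
one-object semigroupoid (i.e. a semigroup). -/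
def pre0 (S : Sgpd O A) (R : Data0 S I Λ) : PreSgpd Unit (Carrier0 S R) where
  src _ := ()
  tgt _ := ()
  mul := mul0 S R

/-- Data for a Rees matrix construction without zero (no zero entries in `P`). -/
structure Data (S : Sgpd O A) (I Λ : Type) where
  F : I → O
  G : Λ → O
  P : Λ → I → A
  F_into : ∀ i, ∃ a : A, S.src a = F i
  F_onto : ∀ a : A, ∃ i, F i = S.src a
  G_into : ∀ lam, ∃ a : A, S.tgt a = G lam
  G_onto : ∀ a : A, ∃ lam, G lam = S.tgt a
  P_src : ∀ lam i, S.src (P lam i) = G lam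
  P_tgt : ∀ lam i, S.tgt (P lam i) = F i

/-- Underlying set of the Rees matrix semigroup without zero. -/
def Carrier (S : Sgpd O A) (R : Data S I Λ) : Type :=
  Triples S R.F R.G

/-- Multiplication of the Rees matrix semigroup without zero. -/
def mul (S : Sgpd O A) (R : Data S I Λ) :
    Carrier S R → Carrier S R → Carrier S R
  | ⟨(i, x, lam), hx⟩, ⟨(j, y, mu), hy⟩ =>
    ⟨(i, S.mul (S.mul x (R.P lam j)) y, mu),
      prod_valid S hx hy (R.P_src lam j) (R.P_tgt lam j)⟩

/-- The Rees matrix semigroup without zero `M(S; F(I), G(Λ); P)`, as a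
one-object semigroupoid (i.e. a semigroup). -/
def pre (S : Sgpd O A) (R : Data S I Λ) : PreSgpd Unit (Carrier S R) where
  src _ := ()
  tgt _ := ()
  mul := mul S R

/-- The set `S P' S` of arrows of the form `s p t` with `p` a non-zero entry of `P`. -/
def SPS0 (S : Sgpd O A) (R : Data0 S I Λ) : Set A :=
  { a | ∃ s p t lam i, R.P lam i = some p ∧ S.tgt s = S.src p ∧ S.tgt p = S.src t ∧
        a = S.mul (S.mul s p) t }

/-- The set `S P S` for a matrix without zero entries. -/
def SPS (S : Sgpd O A) (R : Data S I Λ) : Set A :=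
  { a | ∃ s t lam i, S.tgt s = S.src (R.P lam i) ∧ S.tgt (R.P lam i) = S.src t ∧
        a = S.mul (S.mul s (R.P lam i)) t }

/-- The set of targets of arrows of `S` (the codomain of `G`). -/
def tgtSet (S : Sgpd O A) : Set O := { v | ∃ a : A, S.tgt a = v }

/-- `T` is strongly right-ideal-generated by a row cross-section of `P`. -/
def StronglyRIG0 (S : Sgpd O A) (R : Data0 S I Λ) (T : Set A) : Prop :=
  ∃ Λ' : Set Λ, Set.BijOn R.G Λ' (tgtSet S) ∧
    ∀ t ∈ T, ∃ lam ∈ Λ', ∃ i p s, R.P lam i = some p ∧ S.tgt p = S.src s ∧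
      t = S.mul p s

/-- `T` is weakly right-ideal-generated by a row cross-section of `P`. -/
def WeaklyRIG0 (S : Sgpd O A) (R : Data0 S I Λ) (T : Set A) : Prop :=
  ∃ Λ' : Set Λ, Set.BijOn R.G Λ' (tgtSet S) ∧
    ∀ t ∈ T, ∃ lam ∈ Λ', ∃ i p, R.P lam i = some p ∧
      (t = p ∨ ∃ s, S.tgt p = S.src s ∧ t = S.mul p s)

/-- Weak right-ideal generation, for a matrix without zero entries. -/
def WeaklyRIG (S : Sgpd O A) (R : Data S I Λ) (T : Set A) : Prop :=
  ∃ Λ' : Set Λ, Set.BijOn R.G Λ' (tgtSet S) ∧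
    ∀ t ∈ T, ∃ lam ∈ Λ', ∃ i,
      (t = R.P lam i ∨ ∃ s, S.tgt (R.P lam i) = S.src s ∧ t = S.mul (R.P lam i) s)

end Rees


namespace RL

variable {α β : Type}

theorem isRegularSet_iff {L : Set (List α)} :
    IsRegularSet L ↔ ∃ σ : Type, ∃ _ : Fintype σ, ∃ M : DFA α σ, M.accepts = L :=
  Iff.rfl

theorem comap (f : β → α) {L : Set (List α)} (h : IsRegularSet L) :
    IsRegularSet {w : List β | w.map f ∈ L} := by
  obtain ⟨σ, _, M, hM⟩ := h
  have hM' : M.accepts = L := hM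
  refine ⟨σ, ‹_›, M.comap f, ?_⟩
  show (M.comap f).accepts = ({w : List β | w.map f ∈ L} : Set (List β))
  rw [DFA.accepts_comap, hM']
  rfl

theorem inter {L₁ L₂ : Set (List α)} (h₁ : IsRegularSet L₁) (h₂ : IsRegularSet L₂) :
    IsRegularSet (L₁ ∩ L₂) := by
  obtain ⟨σ₁, _, M₁, hM₁⟩ := h₁
  obtain ⟨σ₂, _, M₂, hM₂⟩ := h₂
  refine ⟨σ₁ × σ₂, inferInstance,
    ⟨fun s a => (M₁.step s.1 a, M₂.step s.2 a), (M₁.start, M₂.start),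
      {s | s.1 ∈ M₁.accept ∧ s.2 ∈ M₂.accept}⟩, ?_⟩
  have key : ∀ (w : List α) (s₁ : σ₁) (s₂ : σ₂),
      DFA.evalFrom ⟨fun s a => (M₁.step s.1 a, M₂.step s.2 a), (M₁.start, M₂.start),
        {s | s.1 ∈ M₁.accept ∧ s.2 ∈ M₂.accept}⟩ (s₁, s₂) w
        = (M₁.evalFrom s₁ w, M₂.evalFrom s₂ w) := by
    intro w
    induction w with
    | nil => intro s₁ s₂; rfl
    | cons a w ih => intro s₁ s₂; exact ih _ _
  have hM₁' : M₁.accepts = L₁ := hM₁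
  have hM₂' : M₂.accepts = L₂ := hM₂
  ext w
  show _ ↔ w ∈ L₁ ∩ L₂
  rw [← hM₁', ← hM₂']
  simp only [DFA.mem_accepts, DFA.eval]
  rw [key]
  exact Iff.rfl

theorem image (f : α → β) {L : Set (List α)} (h : IsRegularSet L) :
    IsRegularSet ((List.map f) '' L) := by
  classical
  obtain ⟨σ, _, M, hM⟩ := h
  set N : NFA β σ :=
    ⟨fun q b => {q' | ∃ a, f a = b ∧ M.step q a = q'}, {M.start}, M.accept⟩ with hN
  have key : ∀ (w' : List β) (S : Set σ),
      N.evalFrom S w' = {q' | ∃ w q, q ∈ S ∧ w.map f = w' ∧ M.evalFrom q w = q'} := by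
    intro w'
    induction w' with
    | nil =>
      intro S
      ext q'
      simp only [NFA.evalFrom, List.foldl_nil, Set.mem_setOf_eq]
      constructor
      · intro hq; exact ⟨[], q', hq, rfl, rfl⟩
      · rintro ⟨w, q, hq, hw, he⟩
        rw [List.map_eq_nil_iff] at hw
        subst hw; subst he; exact hq
    | cons b w' ih =>
      intro S
      have : N.evalFrom S (b :: w') = N.evalFrom (N.stepSet S b) w' := rfl
      rw [this, ih]
      ext q'
      simp only [Set.mem_setOf_eq]
      constructor
      · rintro ⟨w, q, hq, hw, he⟩
        simp only [NFA.stepSet, Set.mem_iUnion] at hq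
        obtain ⟨s, hs, a, ha, hstep⟩ := hq
        refine ⟨a :: w, s, hs, by rw [List.map_cons, ha, hw], ?_⟩
        show M.evalFrom (M.step s a) w = q'
        rw [hstep]; exact he
      · rintro ⟨w, q, hq, hw, he⟩
        cases w with
        | nil => simp at hw
        | cons a w =>
          simp only [List.map_cons, List.cons.injEq] at hw
          refine ⟨w, M.step q a, ?_, hw.2, he⟩
          simp only [NFA.stepSet, Set.mem_iUnion]
          exact ⟨q, hq, a, hw.1, rfl⟩
  have hM' : M.accepts = L := hM
  refine ⟨Set σ, inferInstance, N.toDFA, ?_⟩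
  show N.toDFA.accepts = ((List.map f) '' L : Set (List β))
  rw [NFA.toDFA_correct]
  ext w'
  simp only [NFA.mem_accepts, hN]
  rw [key]
  constructor
  · rintro ⟨q', hacc, w, q, hq, hw, he⟩
    simp only [Set.mem_singleton_iff] at hq
    subst hq
    exact ⟨w, by rw [← hM']; exact (by subst he; exact hacc), hw⟩
  · rintro ⟨w, hwL, hw⟩
    rw [← hM'] at hwL
    exact ⟨M.eval w, hwL, w, M.start, rfl, hw, rfl⟩

variable {E O : Type}

/-- Tracker update for one coordinate. -/
def upd1 : Option E → (E ⊕ Option O) → Option E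
  | _, Sum.inl e => some e
  | t, Sum.inr _ => t

/-- Tracker update for a padded pair letter. -/
def updT (t : Option E × Option E) (l : (E ⊕ Option O) × (E ⊕ Option O)) :
    Option E × Option E :=
  (upd1 t.1 l.1, upd1 t.2 l.2)

def trkF (t : Option E × Option E) (w : List ((E ⊕ Option O) × (E ⊕ Option O))) :
    Option E × Option E :=
  w.foldl updT t

def trk (w : List ((E ⊕ Option O) × (E ⊕ Option O))) : Option E × Option E :=
  trkF (none, none) w

def padOf (etgt : E → O) (t : Option E) : E ⊕ Option O := Sum.inr (t.map etgt)

def padP (etgt : E → O) (t : Option E × Option E) :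
    (E ⊕ Option O) × (E ⊕ Option O) :=
  (padOf etgt t.1, padOf etgt t.2)

def okB (l : (E ⊕ Option O) × (E ⊕ Option O)) : Bool := l.1.isLeft || l.2.isLeft

theorem okB_padP (etgt : E → O) (t : Option E × Option E) :
    okB (padP etgt t) = false := rfl

theorem ext_regular [Finite E] (etgt : E → O)
    {D : Set (List ((E ⊕ Option O) × (E ⊕ Option O)))}
    (hD : IsRegularSet D) (hclean : ∀ w ∈ D, ∀ l ∈ w, okB l = true) :
    IsRegularSet {w' | ∃ w ∈ D, ∃ k, w' = w ++ List.replicate k (padP etgt (trk w))} := by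
  classical
  obtain ⟨σ, _, M, hM⟩ := hD
  have hM' : M.accepts = D := hM
  letI : Fintype E := Fintype.ofFinite E
  set Mx : DFA ((E ⊕ Option O) × (E ⊕ Option O)) (Option (σ × (Option E × Option E) × Bool)) :=
    ⟨fun s l => match s with
      | none => none
      | some (q, t, false) =>
          if okB l then some (M.step q l, updT t l, false)
          else if l = padP etgt t then some (q, t, true) else none
      | some (q, t, true) => if l = padP etgt t then some (q, t, true) else none,
     some (M.start, (none, none), false),
     {s | ∃ q t b, s = some (q, t, b) ∧ q ∈ M.accept}⟩ with hMx
  have e_none : ∀ w : List ((E ⊕ Option O) × (E ⊕ Option O)), Mx.evalFrom none w = none := by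
    intro w; induction w with
    | nil => rfl
    | cons a w ih => exact ih
  have e_clean : ∀ (w : List ((E ⊕ Option O) × (E ⊕ Option O))) q t, (∀ l ∈ w, okB l = true) →
      Mx.evalFrom (some (q, t, false)) w = some (M.evalFrom q w, trkF t w, false) := by
    intro w
    induction w with
    | nil => intro q t _; rfl
    | cons a w ih =>
      intro q t hcl
      have ha : okB a = true := hcl a (List.mem_cons_self)
      have : Mx.evalFrom (some (q, t, false)) (a :: w)
          = Mx.evalFrom (Mx.step (some (q, t, false)) a) w := rfl
      rw [this]
      have hstep : Mx.step (some (q, t, false)) a = some (M.step q a, updT t a, false) := by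
        simp only [hMx, ha, if_true]
      rw [hstep, ih _ _ (fun l hl => hcl l (List.mem_cons_of_mem a hl))]
      rfl
  have e_pad1 : ∀ (w : List ((E ⊕ Option O) × (E ⊕ Option O))) q t, (∀ l ∈ w, l = padP etgt t) →
      Mx.evalFrom (some (q, t, true)) w = some (q, t, true) := by
    intro w
    induction w with
    | nil => intro q t _; rfl
    | cons a w ih =>
      intro q t hp
      have : Mx.evalFrom (some (q, t, true)) (a :: w)
          = Mx.evalFrom (Mx.step (some (q, t, true)) a) w := rfl
      rw [this]
      have hstep : Mx.step (some (q, t, true)) a = some (q, t, true) := by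
        simp only [hMx, hp a (List.mem_cons_self), if_true]
      rw [hstep]
      exact ih _ _ (fun l hl => hp l (List.mem_cons_of_mem a hl))
  have e_pad2 : ∀ (w : List ((E ⊕ Option O) × (E ⊕ Option O))) q t s, Mx.evalFrom (some (q, t, true)) w = some s →
      (∀ l ∈ w, l = padP etgt t) := by
    intro w
    induction w with
    | nil => intro q t s _; intro l hl; simp at hl
    | cons a w ih =>
      intro q t s hev
      have hc : Mx.evalFrom (some (q, t, true)) (a :: w)
          = Mx.evalFrom (Mx.step (some (q, t, true)) a) w := rfl
      rw [hc] at hev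
      by_cases hpa : a = padP etgt t
      · have hstep : Mx.step (some (q, t, true)) a = some (q, t, true) := by
          simp only [hMx, hpa, if_true]
        rw [hstep] at hev
        intro l hl
        rcases List.mem_cons.mp hl with h | h
        · exact h ▸ hpa
        · exact ih _ _ _ hev l h
      · have hstep : Mx.step (some (q, t, true)) a = none := by
          simp only [hMx, hpa, if_false]
        rw [hstep, e_none] at hev
        exact absurd hev (by simp)
  have e_pad3 : ∀ (w : List ((E ⊕ Option O) × (E ⊕ Option O))) q t s, Mx.evalFrom (some (q, t, true)) w = some s →
      s = (q, t, true) := by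
    intro w q t s hev
    have := e_pad2 w q t s hev
    rw [e_pad1 w q t this] at hev
    exact (Option.some_inj.mp hev).symm
  refine ⟨Option (σ × (Option E × Option E) × Bool), inferInstance, Mx, ?_⟩
  ext w'
  rw [DFA.mem_accepts]
  constructor
  · intro hacc
    -- decompose w'
    have hdec := List.takeWhile_append_dropWhile (p := okB) (l := w')
    set a := w'.takeWhile okB with hA
    set b := w'.dropWhile okB with hB
    have hclA : ∀ l ∈ a, okB l = true := fun l hl => List.mem_takeWhile_imp hl
    have heva : Mx.eval w' = Mx.evalFrom (some (M.evalFrom M.start a, trkF (none, none) a, false)) b := by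
      show Mx.evalFrom Mx.start w' = _
      rw [← hdec, DFA.evalFrom_of_append]
      congr 1
      exact e_clean a M.start (none, none) hclA
    cases hb : b with
    | nil =>
      rw [hb] at heva hdec
      simp only [List.append_nil] at hdec
      obtain ⟨q, t, bb, hs, hq⟩ := hacc
      rw [heva] at hs
      simp only [DFA.evalFrom_nil, Option.some_inj] at hs
      refine ⟨a, ?_, 0, by rw [List.replicate_zero, List.append_nil, hdec]⟩
      rw [← hM']
      show M.evalFrom M.start a ∈ M.accept
      have : q = M.evalFrom M.start a := by
        have := congrArg (fun x => x.1) hs; exact this.symm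
      rw [← this]; exact hq
    | cons l rest =>
      have hlb : okB l = false := by
        have := List.head?_dropWhile_not okB w'
        rw [← hB, hb] at this
        simpa using this
      rw [hb] at heva
      have hstep0 : Mx.evalFrom (some (M.evalFrom M.start a, trkF (none, none) a, false)) (l :: rest)
          = Mx.evalFrom (Mx.step (some (M.evalFrom M.start a, trkF (none, none) a, false)) l) rest := rfl
      rw [hstep0] at heva
      by_cases hpl : l = padP etgt (trkF (none, none) a)
      · have hstep : Mx.step (some (M.evalFrom M.start a, trkF (none, none) a, false)) l
            = some (M.evalFrom M.start a, trkF (none, none) a, true) := by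
          simp only [hMx, hlb, if_false, hpl, if_true]
          rfl
        rw [hstep] at heva
        obtain ⟨q, t, bb, hs, hq⟩ := hacc
        rw [heva] at hs
        have hall := e_pad2 rest _ _ _ hs
        have hqeq := e_pad3 rest _ _ _ hs
        refine ⟨a, ?_, (l :: rest).length, ?_⟩
        · rw [← hM']
          show M.evalFrom M.start a ∈ M.accept
          have h1 : q = M.evalFrom M.start a := congrArg (fun x => x.1) hqeq
          rw [← h1]; exact hq
        · rw [show trk a = trkF (none, none) a from rfl]
          rw [← hdec, hb]
          congr 1
          rw [List.eq_replicate_iff]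
          refine ⟨rfl, ?_⟩
          intro x hx
          rcases List.mem_cons.mp hx with h | h
          · rw [h, hpl]
          · exact hall x h
      · have hstep : Mx.step (some (M.evalFrom M.start a, trkF (none, none) a, false)) l = none := by
          simp only [hMx, hlb, if_false, hpl]
          rfl
        rw [hstep, e_none] at heva
        obtain ⟨q, t, bb, hs, hq⟩ := hacc
        rw [heva] at hs
        exact absurd hs (by simp)
  · rintro ⟨w, hw, k, rfl⟩
    rw [show trk w = trkF (none, none) w from rfl]
    have hclw : ∀ l ∈ w, okB l = true := hclean w hw
    have hev1 : Mx.eval (w ++ List.replicate k (padP etgt (trkF (none, none) w)))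
        = Mx.evalFrom (some (M.evalFrom M.start w, trkF (none, none) w, false))
            (List.replicate k (padP etgt (trkF (none, none) w))) := by
      show Mx.evalFrom Mx.start _ = _
      rw [DFA.evalFrom_of_append]
      congr 1
      exact e_clean w M.start (none, none) hclw
    have hwacc : M.evalFrom M.start w ∈ M.accept := by
      have : w ∈ M.accepts := by rw [hM']; exact hw
      exact this
    rw [hev1]
    cases k with
    | zero =>
      simp only [List.replicate_zero, DFA.evalFrom_nil]
      exact ⟨M.evalFrom M.start w, trkF (none, none) w, false, rfl, hwacc⟩
    | succ k =>
      rw [List.replicate_succ]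
      have hstep0 : Mx.evalFrom (some (M.evalFrom M.start w, trkF (none, none) w, false))
          (padP etgt (trkF (none, none) w) :: List.replicate k (padP etgt (trkF (none, none) w)))
          = Mx.evalFrom (Mx.step (some (M.evalFrom M.start w, trkF (none, none) w, false))
              (padP etgt (trkF (none, none) w))) (List.replicate k (padP etgt (trkF (none, none) w))) := rfl
      rw [hstep0]
      have hstep : Mx.step (some (M.evalFrom M.start w, trkF (none, none) w, false))
          (padP etgt (trkF (none, none) w)) = some (M.evalFrom M.start w, trkF (none, none) w, true) := by
        simp [hMx, okB_padP]
      rw [hstep]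
      rw [e_pad1 _ _ _ (fun l hl => (List.eq_of_mem_replicate hl))]
      exact ⟨M.evalFrom M.start w, trkF (none, none) w, true, rfl, hwacc⟩

theorem strip_regular [Finite E] (etgt : E → O)
    {D : Set (List ((E ⊕ Option O) × (E ⊕ Option O)))} (hD : IsRegularSet D) :
    IsRegularSet {w | (∀ l ∈ w, okB l = true) ∧
      ∃ k, w ++ List.replicate k (padP etgt (trk w)) ∈ D} := by
  classical
  obtain ⟨σ, _, M, hM⟩ := hD
  have hM' : M.accepts = D := hM
  letI : Fintype E := Fintype.ofFinite E
  set Ms : DFA ((E ⊕ Option O) × (E ⊕ Option O)) (Option (σ × (Option E × Option E))) :=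
    ⟨fun s l => match s with
      | none => none
      | some (q, t) => if okB l then some (M.step q l, updT t l) else none,
     some (M.start, (none, none)),
     {s | ∃ q t, s = some (q, t) ∧
        ∃ k, M.evalFrom q (List.replicate k (padP etgt t)) ∈ M.accept}⟩ with hMs
  have e_none : ∀ w : List ((E ⊕ Option O) × (E ⊕ Option O)), Ms.evalFrom none w = none := by
    intro w; induction w with
    | nil => rfl
    | cons a w ih => exact ih
  have e_clean : ∀ (w : List ((E ⊕ Option O) × (E ⊕ Option O))) q t, (∀ l ∈ w, okB l = true) →
      Ms.evalFrom (some (q, t)) w = some (M.evalFrom q w, trkF t w) := by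
    intro w
    induction w with
    | nil => intro q t _; rfl
    | cons a w ih =>
      intro q t hcl
      have ha : okB a = true := hcl a (List.mem_cons_self)
      have : Ms.evalFrom (some (q, t)) (a :: w)
          = Ms.evalFrom (Ms.step (some (q, t)) a) w := rfl
      rw [this]
      have hstep : Ms.step (some (q, t)) a = some (M.step q a, updT t a) := by
        simp only [hMs, ha, if_true]
      rw [hstep, ih _ _ (fun l hl => hcl l (List.mem_cons_of_mem a hl))]
      rfl
  refine ⟨Option (σ × (Option E × Option E)), inferInstance, Ms, ?_⟩
  ext w
  rw [DFA.mem_accepts]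
  constructor
  · intro hacc
    obtain ⟨q, t, hs, k, hk⟩ := hacc
    rcases Classical.em (∀ l ∈ w, okB l = true) with hcl | hcl
    · refine ⟨hcl, ?_⟩
      rw [show Ms.eval w = Ms.evalFrom Ms.start w from rfl] at hs
      rw [show Ms.start = some (M.start, (none, none)) from rfl] at hs
      rw [e_clean w M.start (none, none) hcl] at hs
      have h1 : M.evalFrom M.start w = q := congrArg (fun x => x.1) (Option.some_inj.mp hs)
      have h2 : trkF (none, none) w = t := congrArg (fun x => x.2) (Option.some_inj.mp hs)
      refine ⟨k, ?_⟩
      rw [← hM']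
      show M.evalFrom M.start (w ++ List.replicate k (padP etgt (trk w))) ∈ M.accept
      rw [DFA.evalFrom_of_append, show trk w = trkF (none, none) w from rfl, h1, h2]
      exact hk
    · exfalso
      push_neg at hcl
      obtain ⟨l0, hl0mem, hl0⟩ := hcl
      -- decompose w at the first bad letter
      have hdec := List.takeWhile_append_dropWhile (p := okB) (l := w)
      set a := w.takeWhile okB with hA
      set b := w.dropWhile okB with hB
      have hclA : ∀ l ∈ a, okB l = true := fun l hl => List.mem_takeWhile_imp hl
      cases hb : b with
      | nil =>
        rw [hb] at hdec
        simp only [List.append_nil] at hdec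
        rw [← hdec] at hl0mem
        exact absurd (hclA l0 hl0mem) (by simp [hl0])
      | cons l rest =>
        have hlb : okB l = false := by
          have := List.head?_dropWhile_not okB w
          rw [← hB, hb] at this
          simpa using this
        have heva : Ms.eval w = Ms.evalFrom (some (M.evalFrom M.start a, trkF (none, none) a)) b := by
          show Ms.evalFrom Ms.start w = _
          rw [← hdec, DFA.evalFrom_of_append]
          congr 1
          exact e_clean a M.start (none, none) hclA
        rw [hb] at heva
        have hstep0 : Ms.evalFrom (some (M.evalFrom M.start a, trkF (none, none) a)) (l :: rest)
            = Ms.evalFrom (Ms.step (some (M.evalFrom M.start a, trkF (none, none) a)) l) rest := rfl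
        have hstep : Ms.step (some (M.evalFrom M.start a, trkF (none, none) a)) l = none := by
          simp only [hMs, hlb]
          rfl
        rw [hstep0, hstep, e_none] at heva
        rw [heva] at hs
        exact absurd hs (by simp)
  · rintro ⟨hcl, k, hk⟩
    have hev : Ms.eval w = some (M.evalFrom M.start w, trkF (none, none) w) := by
      show Ms.evalFrom Ms.start w = _
      exact e_clean w M.start (none, none) hcl
    rw [hev]
    refine ⟨M.evalFrom M.start w, trkF (none, none) w, rfl, k, ?_⟩
    have : w ++ List.replicate k (padP etgt (trk w)) ∈ M.accepts := by rw [hM']; exact hk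
    rw [DFA.mem_accepts, show M.eval (w ++ List.replicate k (padP etgt (trk w)))
      = M.evalFrom (M.evalFrom M.start w) (List.replicate k (padP etgt (trk w))) from
        DFA.evalFrom_of_append M M.start _ _] at this
    rw [show trkF (none, none) w = trk w from rfl]
    exact this

/-- The padded word of length `m`. -/
def pw (etgt : E → O) (u : List E) (m : ℕ) : List (E ⊕ Option O) :=
  u.map Sum.inl ++ List.replicate (m - u.length) (padSym etgt u)

theorem pw_length (etgt : E → O) {u : List E} {m : ℕ} (h : u.length ≤ m) :
    (pw etgt u m).length = m := by
  simp [pw, Nat.add_sub_cancel' h]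

theorem takeWhile_append_replicate {γ : Type} {p : γ → Bool} {l : List γ} {k : ℕ} {a : γ}
    (hl : ∀ x ∈ l, p x = true) (ha : p a = false) :
    List.takeWhile p (l ++ List.replicate k a) = l := by
  induction l with
  | nil =>
    simp only [List.nil_append]
    cases k with
    | zero => rfl
    | succ k => rw [List.replicate_succ, List.takeWhile_cons_of_neg (by simp [ha])]
  | cons x l ih =>
    rw [List.cons_append, List.takeWhile_cons_of_pos (hl x (List.mem_cons_self))]
    rw [ih (fun y hy => hl y (List.mem_cons_of_mem x hy))]

theorem zip_take_right {γ δ : Type} : ∀ (l : List γ) (r : List δ),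
    l.zip (r.take l.length) = l.zip r := by
  intro l
  induction l with
  | nil => intro r; simp
  | cons x l ih =>
    intro r
    cases r with
    | nil => simp
    | cons y r => simp [List.zip_cons_cons, ih r]

theorem zip_replicate_left {γ δ : Type} (f : δ → γ) (p : γ) :
    ∀ (l : List δ), (List.replicate l.length p).zip (l.map f) = l.map (fun e => (p, f e)) := by
  intro l
  induction l with
  | nil => rfl
  | cons x l ih => simp only [List.length_cons, List.replicate_succ, List.map_cons,
      List.zip_cons_cons, ih]

theorem zip_replicate_right {γ δ : Type} (f : δ → γ) (p : γ) :
    ∀ (l : List δ), (l.map f).zip (List.replicate l.length p) = l.map (fun e => (f e, p)) := by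
  intro l
  induction l with
  | nil => rfl
  | cons x l ih => simp only [List.length_cons, List.replicate_succ, List.map_cons,
      List.zip_cons_cons, ih]

theorem zip_replicate_replicate {γ δ : Type} (p : γ) (q : δ) (k : ℕ) :
    (List.replicate k p).zip (List.replicate k q) = List.replicate k (p, q) := by
  induction k with
  | zero => rfl
  | succ k ih => simp only [List.replicate_succ, List.zip_cons_cons, ih]

theorem zip_take_left {γ δ : Type} : ∀ (r : List δ) (l : List γ),
    (l.take r.length).zip r = l.zip r := by
  intro r
  induction r with
  | nil => intro l; simp
  | cons y r ih =>
    intro l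
    cases l with
    | nil => simp
    | cons x l => simp [List.zip_cons_cons, ih l]

theorem zip_map_take {γ δ : Type} (f : δ → γ) (u v : List δ) :
    (u.map f).zip ((v.take u.length).map f) = (u.map f).zip (v.map f) := by
  rw [List.map_take, show u.length = (u.map f).length from (List.length_map _).symm,
    zip_take_right]

theorem zip_map_take' {γ δ : Type} (f : δ → γ) (u v : List δ) :
    ((u.take v.length).map f).zip (v.map f) = (u.map f).zip (v.map f) := by
  rw [List.map_take, show v.length = (v.map f).length from (List.length_map _).symm,
    zip_take_left]

/-- `deltaPair` as a zip of padded words. -/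
theorem deltaPair_eq_zip_pw (etgt : E → O) (u v : List E) :
    deltaPair etgt u v = (pw etgt u (max u.length v.length)).zip
      (pw etgt v (max u.length v.length)) := by
  rcases le_or_gt u.length v.length with h | h
  · rw [deltaPair, if_pos h, pw, pw, max_eq_right h, Nat.sub_self, List.replicate_zero,
      List.append_nil]
    conv_rhs => rw [← List.take_append_drop u.length v, List.map_append, List.zip_append
      (by simp [min_eq_left h])]
    rw [zip_map_take]
    congr 1
    rw [show (List.take u.length v ++ List.drop u.length v).length - u.length
      = (v.drop u.length).length by simp, zip_replicate_left]
  · rw [deltaPair, if_neg (not_le.mpr h), pw, pw, max_eq_left h.le, Nat.sub_self,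
      List.replicate_zero, List.append_nil]
    conv_rhs => rw [← List.take_append_drop v.length u, List.map_append, List.zip_append
      (by simp [min_eq_left h.le])]
    rw [zip_map_take']
    congr 1
    rw [show (List.take v.length u ++ List.drop v.length u).length - v.length
      = (u.drop v.length).length by simp, zip_replicate_right]

theorem pw_append_replicate (etgt : E → O) {u : List E} {m : ℕ} (h : u.length ≤ m) (j : ℕ) :
    pw etgt u m ++ List.replicate j (padSym etgt u) = pw etgt u (m + j) := by
  rw [pw, pw, List.append_assoc, ← List.replicate_add]
  congr 2
  omega

theorem deltaPair_length (etgt : E → O) (u v : List E) :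
    (deltaPair etgt u v).length = max u.length v.length := by
  rw [deltaPair_eq_zip_pw, List.length_zip, pw_length etgt (le_max_left _ _),
    pw_length etgt (le_max_right _ _), min_self]

theorem zip_pw_eq_deltaPair_append (etgt : E → O) {u v : List E} {m : ℕ}
    (hu : u.length ≤ m) (hv : v.length ≤ m) :
    (pw etgt u m).zip (pw etgt v m)
      = deltaPair etgt u v ++ List.replicate (m - max u.length v.length)
          (padSym etgt u, padSym etgt v) := by
  have hM : max u.length v.length ≤ m := max_le hu hv
  have hm : m = max u.length v.length + (m - max u.length v.length) := by omega
  rw [deltaPair_eq_zip_pw]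
  conv_lhs => rw [hm, ← pw_append_replicate etgt (le_max_left u.length v.length),
    ← pw_append_replicate etgt (le_max_right u.length v.length)]
  rw [List.zip_append (by rw [pw_length etgt (le_max_left _ _), pw_length etgt (le_max_right _ _)]),
    zip_replicate_replicate]

theorem deltaPair_map_fst (etgt : E → O) (u v : List E) :
    (deltaPair etgt u v).map Prod.fst = pw etgt u (max u.length v.length) := by
  rw [deltaPair_eq_zip_pw]
  exact List.map_fst_zip (le_of_eq (by rw [pw_length etgt (le_max_left _ _),
    pw_length etgt (le_max_right _ _)]))

theorem deltaPair_map_snd (etgt : E → O) (u v : List E) :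
    (deltaPair etgt u v).map Prod.snd = pw etgt v (max u.length v.length) := by
  rw [deltaPair_eq_zip_pw]
  exact List.map_snd_zip (le_of_eq (by rw [pw_length etgt (le_max_left _ _),
    pw_length etgt (le_max_right _ _)]))

theorem takeWhile_pw (etgt : E → O) (u : List E) (m : ℕ) :
    (pw etgt u m).takeWhile Sum.isLeft = u.map Sum.inl := by
  rw [pw]
  exact takeWhile_append_replicate (by simp) rfl

theorem pw_injective (etgt : E → O) {u u' : List E} {m : ℕ}
    (h : pw etgt u m = pw etgt u' m) : u = u' := by
  have := congrArg (List.takeWhile Sum.isLeft) h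
  rw [takeWhile_pw, takeWhile_pw] at this
  exact List.map_injective_iff.mpr Sum.inl_injective this

theorem deltaPair_clean (etgt : E → O) (u v : List E) :
    ∀ l ∈ deltaPair etgt u v, okB l = true := by
  rintro ⟨x, y⟩ hl
  rw [deltaPair] at hl
  rcases List.mem_append.mp hl with h | h
  · obtain ⟨hx, _⟩ := List.of_mem_zip h
    obtain ⟨e, _, he⟩ := List.mem_map.mp hx
    rw [okB, ← he]
    simp
  · split at h
    · obtain ⟨e, _, he⟩ := List.mem_map.mp h
      rw [okB]
      rw [show y = Sum.inl e from congrArg Prod.snd he.symm]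
      simp
    · obtain ⟨e, _, he⟩ := List.mem_map.mp h
      rw [okB]
      rw [show x = Sum.inl e from congrArg Prod.fst he.symm]
      simp

theorem okB_padSym_pair (etgt : E → O) (u v : List E) :
    okB (padSym etgt u, padSym etgt v) = false := rfl

theorem trkF_fst (t : Option E × Option E) (w : List ((E ⊕ Option O) × (E ⊕ Option O))) :
    (trkF t w).1 = (w.map Prod.fst).foldl upd1 t.1 := by
  induction w generalizing t with
  | nil => rfl
  | cons a w ih => exact ih (updT t a)

theorem trkF_snd (t : Option E × Option E) (w : List ((E ⊕ Option O) × (E ⊕ Option O))) :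
    (trkF t w).2 = (w.map Prod.snd).foldl upd1 t.2 := by
  induction w generalizing t with
  | nil => rfl
  | cons a w ih => exact ih (updT t a)

theorem foldl_upd1_map_inl (u : List E) : ∀ t : Option E,
    List.foldl (upd1 (O := O)) t (u.map Sum.inl) = u.getLast?.or t := by
  induction u using List.reverseRec with
  | nil => intro t; simp [Option.none_or]
  | append_singleton u e ih =>
    intro t
    rw [List.map_append, List.foldl_append, List.getLast?_concat]
    rfl

theorem foldl_upd1_replicate (k : ℕ) (x : Option O) : ∀ t : Option E,
    List.foldl upd1 t (List.replicate k (Sum.inr x)) = t := by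
  induction k with
  | zero => intro t; rfl
  | succ k ih => intro t; rw [List.replicate_succ]; exact ih t

theorem foldl_upd1_pw (etgt : E → O) (u : List E) (m : ℕ) :
    List.foldl upd1 none (pw etgt u m) = u.getLast? := by
  rw [pw, List.foldl_append, foldl_upd1_map_inl, Option.or_none]
  exact foldl_upd1_replicate _ _ _

theorem padP_trk_deltaPair (etgt : E → O) (u v : List E) :
    padP etgt (trk (deltaPair etgt u v)) = (padSym etgt u, padSym etgt v) := by
  rw [padP, trk]
  have h1 : (trkF (none, none) (deltaPair etgt u v)).1 = u.getLast? := by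
    rw [trkF_fst, deltaPair_map_fst, foldl_upd1_pw]
  have h2 : (trkF (none, none) (deltaPair etgt u v)).2 = v.getLast? := by
    rw [trkF_snd, deltaPair_map_snd, foldl_upd1_pw]
  rw [h1, h2]
  rfl

theorem map_proj12_zip3 {γ : Type} : ∀ (l₁ l₂ l₃ : List γ),
    l₁.length = l₂.length → l₂.length = l₃.length →
    (l₁.zip (l₂.zip l₃)).map (fun t => (t.1, t.2.1)) = l₁.zip l₂ := by
  intro l₁
  induction l₁ with
  | nil => intro l₂ l₃ _ _; simp
  | cons x l₁ ih =>
    intro l₂ l₃ h12 h23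
    cases l₂ with
    | nil => simp at h12
    | cons y l₂ =>
      cases l₃ with
      | nil => simp at h23
      | cons z l₃ =>
        simp only [List.zip_cons_cons, List.map_cons]
        rw [ih l₂ l₃ (by simpa using h12) (by simpa using h23)]

theorem map_proj13_zip3 {γ : Type} : ∀ (l₁ l₂ l₃ : List γ),
    l₁.length = l₂.length → l₂.length = l₃.length →
    (l₁.zip (l₂.zip l₃)).map (fun t => (t.1, t.2.2)) = l₁.zip l₃ := by
  intro l₁
  induction l₁ with
  | nil => intro l₂ l₃ _ _; simp
  | cons x l₁ ih =>
    intro l₂ l₃ h12 h23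
    cases l₂ with
    | nil => simp at h12
    | cons y l₂ =>
      cases l₃ with
      | nil => simp at h23
      | cons z l₃ =>
        simp only [List.zip_cons_cons, List.map_cons]
        rw [ih l₂ l₃ (by simpa using h12) (by simpa using h23)]

theorem map_proj23_zip3 {γ : Type} : ∀ (l₁ l₂ l₃ : List γ),
    l₁.length = l₂.length → l₂.length = l₃.length →
    (l₁.zip (l₂.zip l₃)).map (fun t => (t.2.1, t.2.2)) = l₂.zip l₃ := by
  intro l₁
  induction l₁ with
  | nil => intro l₂ l₃ h12 _; cases l₂ with
    | nil => simp
    | cons y l₂ => simp at h12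
  | cons x l₁ ih =>
    intro l₂ l₃ h12 h23
    cases l₂ with
    | nil => simp at h12
    | cons y l₂ =>
      cases l₃ with
      | nil => simp at h23
      | cons z l₃ =>
        simp only [List.zip_cons_cons, List.map_cons]
        rw [ih l₂ l₃ (by simpa using h12) (by simpa using h23)]

theorem map_pair_eq_zip {γ δ ε : Type} (f : γ → δ) (g : γ → ε) : ∀ (l : List γ),
    l.map (fun t => (f t, g t)) = (l.map f).zip (l.map g) := by
  intro l
  induction l with
  | nil => rfl
  | cons x l ih => simp only [List.map_cons, List.zip_cons_cons, ih]


section Comp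

variable {E O : Type}

theorem comp_syncRegular [Finite E] (etgt : E → O) {R₁ R₂ : Set (List E × List E)}
    (h₁ : IsRegularSet {w | ∃ p ∈ R₁, w = deltaPair etgt p.1 p.2})
    (h₂ : IsRegularSet {w | ∃ p ∈ R₂, w = deltaPair etgt p.1 p.2}) :
    IsRegularSet {w | ∃ p ∈ {q : List E × List E | ∃ z, (q.1, z) ∈ R₁ ∧ (z, q.2) ∈ R₂},
      w = deltaPair etgt p.1 p.2} := by
  classical
  set θ : Type := (E ⊕ Option O) × (E ⊕ Option O) with hθ
  -- the three projections from triple letters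
  set π₁₂ : (E ⊕ Option O) × θ → θ := fun t => (t.1, t.2.1) with hπ₁₂
  set π₂₃ : (E ⊕ Option O) × θ → θ := fun t => (t.2.1, t.2.2) with hπ₂₃
  set π₁₃ : (E ⊕ Option O) × θ → θ := fun t => (t.1, t.2.2) with hπ₁₃
  set D₁ : Set (List θ) := {w | ∃ p ∈ R₁, w = deltaPair etgt p.1 p.2} with hD₁
  set D₂ : Set (List θ) := {w | ∃ p ∈ R₂, w = deltaPair etgt p.1 p.2} with hD₂
  have hcl₁ : ∀ w ∈ D₁, ∀ l ∈ w, okB l = true := by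
    rintro w ⟨p, _, rfl⟩; exact deltaPair_clean etgt p.1 p.2
  have hcl₂ : ∀ w ∈ D₂, ∀ l ∈ w, okB l = true := by
    rintro w ⟨p, _, rfl⟩; exact deltaPair_clean etgt p.1 p.2
  have hE₁ := ext_regular etgt h₁ hcl₁
  have hE₂ := ext_regular etgt h₂ hcl₂
  set X₁ : Set (List θ) := {w' | ∃ w ∈ D₁, ∃ k, w' = w ++ List.replicate k (padP etgt (trk w))}
    with hX₁
  set X₂ : Set (List θ) := {w' | ∃ w ∈ D₂, ∃ k, w' = w ++ List.replicate k (padP etgt (trk w))}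
    with hX₂
  have hC₁ := RL.comap π₁₂ hE₁
  have hC₂ := RL.comap π₂₃ hE₂
  have hL := RL.inter hC₁ hC₂
  have hD := RL.image π₁₃ hL
  have hF := strip_regular etgt hD
  have claim : {w : List θ | (∀ l ∈ w, okB l = true) ∧ ∃ k,
        w ++ List.replicate k (padP etgt (trk w)) ∈
          (List.map π₁₃) '' ({w₃ | w₃.map π₁₂ ∈ X₁} ∩ {w₃ | w₃.map π₂₃ ∈ X₂})}
      = {w | ∃ p ∈ {q : List E × List E | ∃ z, (q.1, z) ∈ R₁ ∧ (z, q.2) ∈ R₂},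
          w = deltaPair etgt p.1 p.2} := by
    ext w
    constructor
    · rintro ⟨hclw, k, hmem⟩
      obtain ⟨w₃, ⟨h12, h23⟩, himg⟩ := hmem
      obtain ⟨w₁, hw₁D, j₁, he₁⟩ := h12
      obtain ⟨⟨u, z⟩, hR1, rfl⟩ := hw₁D
      obtain ⟨w₂, hw₂D, j₂, he₂⟩ := h23
      obtain ⟨⟨z₂, v⟩, hR2, rfl⟩ := hw₂D
      rw [padP_trk_deltaPair] at he₁ he₂
      set n := w₃.length with hn
      have hn₁ : n = max u.length z.length + j₁ := by
        have h := congrArg List.length he₁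
        rw [List.length_map, List.length_append, List.length_replicate, deltaPair_length] at h
        exact h
      have hn₂ : n = max z₂.length v.length + j₂ := by
        have h := congrArg List.length he₂
        rw [List.length_map, List.length_append, List.length_replicate, deltaPair_length] at h
        exact h
      have hfst : w₃.map (fun t => t.1) = pw etgt u n := by
        have : w₃.map (fun t => t.1) = (w₃.map π₁₂).map Prod.fst := by
          rw [List.map_map]; rfl
        rw [this, he₁, List.map_append, deltaPair_map_fst, List.map_replicate]
        show pw etgt u (max u.length z.length) ++ List.replicate j₁ (padSym etgt u) = _
        rw [pw_append_replicate etgt (le_max_left _ _), ← hn₁]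
      have hmid : w₃.map (fun t => t.2.1) = pw etgt z n := by
        have : w₃.map (fun t => t.2.1) = (w₃.map π₁₂).map Prod.snd := by
          rw [List.map_map]; rfl
        rw [this, he₁, List.map_append, deltaPair_map_snd, List.map_replicate]
        show pw etgt z (max u.length z.length) ++ List.replicate j₁ (padSym etgt z) = _
        rw [pw_append_replicate etgt (le_max_right _ _), ← hn₁]
      have hmid₂ : w₃.map (fun t => t.2.1) = pw etgt z₂ n := by
        have : w₃.map (fun t => t.2.1) = (w₃.map π₂₃).map Prod.fst := by
          rw [List.map_map]; rfl
        rw [this, he₂, List.map_append, deltaPair_map_fst, List.map_replicate]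
        show pw etgt z₂ (max z₂.length v.length) ++ List.replicate j₂ (padSym etgt z₂) = _
        rw [pw_append_replicate etgt (le_max_left _ _), ← hn₂]
      have hthd : w₃.map (fun t => t.2.2) = pw etgt v n := by
        have : w₃.map (fun t => t.2.2) = (w₃.map π₂₃).map Prod.snd := by
          rw [List.map_map]; rfl
        rw [this, he₂, List.map_append, deltaPair_map_snd, List.map_replicate]
        show pw etgt v (max z₂.length v.length) ++ List.replicate j₂ (padSym etgt v) = _
        rw [pw_append_replicate etgt (le_max_right _ _), ← hn₂]
      have hz : z = z₂ := pw_injective etgt (hmid.symm.trans hmid₂)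
      have hw13 : w₃.map π₁₃ = deltaPair etgt u v
          ++ List.replicate (n - max u.length v.length) (padSym etgt u, padSym etgt v) := by
        rw [hπ₁₃, map_pair_eq_zip, hfst, hthd,
          zip_pw_eq_deltaPair_append etgt (by omega) (by omega)]
      have heq : w ++ List.replicate k (padP etgt (trk w)) = deltaPair etgt u v
          ++ List.replicate (n - max u.length v.length) (padSym etgt u, padSym etgt v) := by
        rw [← himg, hw13]
      have hWeq : w = deltaPair etgt u v := by
        have hL := congrArg (List.takeWhile okB) heq
        rwa [takeWhile_append_replicate hclw (by rfl),
          takeWhile_append_replicate (deltaPair_clean etgt u v)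
            (okB_padSym_pair etgt u v)] at hL
      exact ⟨(u, v), ⟨z, hR1, hz ▸ hR2⟩, hWeq⟩
    · rintro ⟨⟨u, v⟩, ⟨z, h1, h2⟩, rfl⟩
      set m := max (max u.length v.length) z.length with hm
      have hum : u.length ≤ m := le_trans (le_max_left _ _) (le_max_left _ _)
      have hvm : v.length ≤ m := le_trans (le_max_right _ _) (le_max_left _ _)
      have hzm : z.length ≤ m := le_max_right _ _
      set w₃ : List ((E ⊕ Option O) × θ) := (pw etgt u m).zip ((pw etgt z m).zip (pw etgt v m))
        with hw₃
      have l₁ : (pw etgt u m).length = m := pw_length etgt hum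
      have l₂ : (pw etgt z m).length = m := pw_length etgt hzm
      have l₃ : (pw etgt v m).length = m := pw_length etgt hvm
      have h12 : w₃.map π₁₂ = (pw etgt u m).zip (pw etgt z m) :=
        map_proj12_zip3 _ _ _ (l₁.trans l₂.symm) (l₂.trans l₃.symm)
      have h23 : w₃.map π₂₃ = (pw etgt z m).zip (pw etgt v m) :=
        map_proj23_zip3 _ _ _ (l₁.trans l₂.symm) (l₂.trans l₃.symm)
      have h13 : w₃.map π₁₃ = (pw etgt u m).zip (pw etgt v m) :=
        map_proj13_zip3 _ _ _ (l₁.trans l₂.symm) (l₂.trans l₃.symm)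
      refine ⟨deltaPair_clean etgt u v, m - max u.length v.length, ?_⟩
      refine ⟨w₃, ⟨?_, ?_⟩, ?_⟩
      · rw [Set.mem_setOf_eq, h12, zip_pw_eq_deltaPair_append etgt hum hzm]
        exact ⟨deltaPair etgt u z, ⟨(u, z), h1, rfl⟩, m - max u.length z.length,
          by rw [padP_trk_deltaPair]⟩
      · rw [Set.mem_setOf_eq, h23, zip_pw_eq_deltaPair_append etgt hzm hvm]
        exact ⟨deltaPair etgt z v, ⟨(z, v), h2, rfl⟩, m - max z.length v.length,
          by rw [padP_trk_deltaPair]⟩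
      · rw [h13, zip_pw_eq_deltaPair_append etgt hum hvm, padP_trk_deltaPair]
  rw [← claim]
  exact hF

end Comp

end RL


section SgpdLemmas

variable {O A E : Type}

theorem evalPath?_isSome (S : PreSgpd O A) (lab : E → A) {l : List E} (h : l ≠ []) :
    ∃ x, evalPath? S lab l = some x := by
  cases l with
  | nil => exact absurd rfl h
  | cons e l => exact ⟨_, rfl⟩

theorem evalPath?_append (S : PreSgpd O A) (lab : E → A) {l₁ : List E} (l₂ : List E)
    {x : A} (hx : evalPath? S lab l₁ = some x) :
    evalPath? S lab (l₁ ++ l₂) = some ((l₂.map lab).foldl S.mul x) := by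
  cases l₁ with
  | nil => exact absurd hx (by simp [evalPath?])
  | cons e l =>
    have hx' : (l.map lab).foldl S.mul (lab e) = x := Option.some_inj.mp hx
    show some (((l ++ l₂).map lab).foldl S.mul (lab e)) = _
    rw [List.map_append, List.foldl_append, hx']

theorem evalPath?_concat (S : PreSgpd O A) (lab : E → A) {l : List E} (e : E)
    {x : A} (hx : evalPath? S lab l = some x) :
    evalPath? S lab (l ++ [e]) = some (S.mul x (lab e)) :=
  evalPath?_append S lab [e] hx

theorem evalPath?_map {E' : Type} (S : PreSgpd O A) (lab' : E' → A) (g : E → E')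
    (l : List E) : evalPath? S lab' (l.map g) = evalPath? S (fun e => lab' (g e)) l := by
  cases l with
  | nil => rfl
  | cons e l =>
    show some _ = some _
    rw [List.map_map]
    rfl

theorem pathTgt?_map {O' E' : Type} (g : E → E') (etgt : E → O') (etgt' : E' → O')
    (hg : ∀ e, etgt' (g e) = etgt e) (l : List E) :
    pathTgt? etgt' (l.map g) = pathTgt? etgt l := by
  rw [pathTgt?, pathTgt?, List.getLast?_map]
  cases l.getLast? with
  | none => rfl
  | some e => show some (etgt' (g e)) = some (etgt e); rw [hg]

theorem padSym_map {O' E' : Type} (g : E → E') (etgt : E → O') (etgt' : E' → O')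
    (hg : ∀ e, etgt' (g e) = etgt e) (l : List E) :
    padSym etgt' (l.map g) = Sum.map g id (padSym etgt l) := by
  rw [padSym, padSym, List.getLast?_map]
  cases l.getLast? with
  | none => rfl
  | some e =>
    show Sum.inr (some (etgt' (g e))) = Sum.map g id (Sum.inr (some (etgt e)))
    rw [hg]
    rfl

theorem deltaPair_map {O' E' : Type} (g : E → E') (etgt : E → O') (etgt' : E' → O')
    (hg : ∀ e, etgt' (g e) = etgt e) (u v : List E) :
    deltaPair etgt' (u.map g) (v.map g)
      = (deltaPair etgt u v).map
          (Prod.map (Sum.map g id) (Sum.map g id)) := by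
  rw [deltaPair, deltaPair, List.map_append]
  congr 1
  · rw [show (u.map g).map (Sum.inl : E' → E' ⊕ Option O')
        = (u.map (Sum.inl : E → E ⊕ Option O')).map (Sum.map g id) by
          rw [List.map_map, List.map_map]; rfl,
      show (v.map g).map (Sum.inl : E' → E' ⊕ Option O')
        = (v.map (Sum.inl : E → E ⊕ Option O')).map (Sum.map g id) by
          rw [List.map_map, List.map_map]; rfl,
      List.zip_map]
  · simp only [List.length_map]
    split
    · rw [← List.map_drop, List.map_map, List.map_map]
      apply List.map_congr_left
      intro e _
      show (padSym etgt' (u.map g), Sum.inl (g e))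
        = Prod.map (Sum.map g id) (Sum.map g id) (padSym etgt u, Sum.inl e)
      rw [padSym_map g etgt etgt' hg]
      rfl
    · rw [← List.map_drop, List.map_map, List.map_map]
      apply List.map_congr_left
      intro e _
      show (Sum.inl (g e), padSym etgt' (v.map g))
        = Prod.map (Sum.map g id) (Sum.map g id) (Sum.inl e, padSym etgt v)
      rw [padSym_map g etgt etgt' hg]
      rfl

/-- The delta language of the `(φ × φ)`-image of a relation is the letterwise image of
the delta language. -/
theorem deltaLang_image {O' E' : Type} (g : E → E') (etgt : E → O') (etgt' : E' → O')
    (hg : ∀ e, etgt' (g e) = etgt e) (R : Set (List E × List E)) :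
    {w | ∃ p ∈ (fun p : List E × List E => (p.1.map g, p.2.map g)) '' R,
        w = deltaPair etgt' p.1 p.2}
      = (List.map (Prod.map (Sum.map g id) (Sum.map g id))) ''
          {w | ∃ p ∈ R, w = deltaPair etgt p.1 p.2} := by
  ext w
  constructor
  · rintro ⟨p', ⟨p, hp, rfl⟩, rfl⟩
    exact ⟨deltaPair etgt p.1 p.2, ⟨p, hp, rfl⟩, (deltaPair_map g etgt etgt' hg p.1 p.2).symm⟩
  · rintro ⟨w₀, ⟨p, hp, rfl⟩, rfl⟩
    exact ⟨(p.1.map g, p.2.map g), ⟨p, hp, rfl⟩, (deltaPair_map g etgt etgt' hg p.1 p.2).symm⟩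

variable {S : Sgpd O A}

/-- The relation of right multiplication by a fixed arrow `a`. -/
def Rmul (C : ChoiceOfReps S.toPreSgpd E) (a : A) : Set (List E × List E) :=
  {p | p.1 ∈ C.K ∧ p.2 ∈ C.K ∧ pathTgt? C.etgt p.1 = some (S.src a) ∧
    ∃ x, evalPath? S.toPreSgpd C.lab p.1 = some x ∧
      evalPath? S.toPreSgpd C.lab p.2 = some (S.mul x a)}

theorem tgt_eval (C : ChoiceOfReps S.toPreSgpd E) :
    ∀ (l : List E), l ≠ [] → IsPathChain C.esrc C.etgt l →
      ∀ x, evalPath? S.toPreSgpd C.lab l = some x →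
        pathTgt? C.etgt l = some (S.tgt x) := by
  intro l
  induction l using List.reverseRec with
  | nil => intro h; exact absurd rfl h
  | append_singleton l e ih =>
    intro _ hc x hx
    rcases eq_or_ne l [] with rfl | hl
    · have hx' : C.lab e = x := Option.some_inj.mp hx
      rw [pathTgt?, List.nil_append, List.getLast?_singleton]
      show some (C.etgt e) = _
      rw [← hx', C.lab_tgt e]
    · obtain ⟨b, hb⟩ := evalPath?_isSome S.toPreSgpd C.lab hl
      have hcl : IsPathChain C.esrc C.etgt l := (List.isChain_append.mp hc).1
      have hlink : C.etgt (l.getLast hl) = C.esrc e := by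
        have h3 := (List.isChain_append.mp hc).2.2
        exact h3 (l.getLast hl) (List.getLast?_eq_getLast hl ▸ rfl) e rfl
      have hx2 : evalPath? S.toPreSgpd C.lab (l ++ [e]) = some (S.mul b (C.lab e)) :=
        evalPath?_concat S.toPreSgpd C.lab e hb
      have hxx : x = S.mul b (C.lab e) := by
        rw [hx] at hx2; exact Option.some_inj.mp hx2
      have htb : pathTgt? C.etgt l = some (S.tgt b) := ih hl hcl b hb
      have htb' : S.tgt b = C.etgt (l.getLast hl) := by
        rw [pathTgt?, List.getLast?_eq_getLast hl] at htb
        exact (Option.some_inj.mp htb).symm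
      have hcomp : S.tgt b = S.src (C.lab e) := by
        rw [htb', hlink, C.lab_src]
      rw [pathTgt?, List.getLast?_concat]
      show some (C.etgt e) = some (S.tgt x)
      rw [hxx, S.tgt_mul b (C.lab e) hcomp, C.lab_tgt]

theorem Rmul_lab (C : ChoiceOfReps S.toPreSgpd E) (e : E) :
    Rmul C (C.lab e) = relEdge C e := by
  ext ⟨u, v⟩
  constructor
  · rintro ⟨hu, hv, htgt, x, hx, hxe⟩
    refine ⟨hu, hv, ?_, ?_⟩
    · rw [htgt, C.lab_src]
    · rw [evalPath?_concat S.toPreSgpd C.lab e hx, hxe]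
  · rintro ⟨hu, hv, htgt, heq⟩
    obtain ⟨x, hx⟩ := evalPath?_isSome S.toPreSgpd C.lab (C.K_path u hu).1
    refine ⟨hu, hv, by rw [htgt, C.lab_src], x, hx, ?_⟩
    rw [← heq, evalPath?_concat S.toPreSgpd C.lab e hx]

theorem Rmul_comp (C : ChoiceOfReps S.toPreSgpd E) (b : A) (e : E)
    (hbe : S.tgt b = S.src (C.lab e)) :
    Rmul C (S.mul b (C.lab e))
      = {p | ∃ z, (p.1, z) ∈ Rmul C b ∧ (z, p.2) ∈ Rmul C (C.lab e)} := by
  have hsrc : S.src (S.mul b (C.lab e)) = S.src b := S.src_mul b (C.lab e) hbe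
  ext ⟨u, v⟩
  constructor
  · rintro ⟨hu, hv, htgt, x, hx, hxa⟩
    have hxb : S.tgt x = S.src b := by
      have h1 := tgt_eval C u (C.K_path u hu).1 (C.K_path u hu).2 x hx
      rw [h1, hsrc] at htgt
      exact Option.some_inj.mp (id htgt.symm : some (S.src b) = some (S.tgt x)) |>.symm
    obtain ⟨z, hz, hze⟩ := C.K_onto (S.mul x b)
    refine ⟨z, ⟨hu, hz, by rw [htgt, hsrc], x, hx, hze⟩, ⟨hz, hv, ?_, S.mul x b, hze, ?_⟩⟩
    · have h2 := tgt_eval C z (C.K_path z hz).1 (C.K_path z hz).2 _ hze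
      rw [h2, S.tgt_mul x b hxb, hbe]
    · rw [hxa, S.mul_assoc' x b (C.lab e) hxb hbe]
  · rintro ⟨z, ⟨hu, hz, htgtu, x, hx, hze⟩, ⟨hz', hv, htgtz, y, hy, hyc⟩⟩
    have hxy : y = S.mul x b := by
      rw [hze] at hy; exact Option.some_inj.mp hy.symm
    have hxb : S.tgt x = S.src b := by
      have h1 := tgt_eval C u (C.K_path u hu).1 (C.K_path u hu).2 x hx
      rw [h1] at htgtu
      exact Option.some_inj.mp htgtu
    refine ⟨hu, hv, by rw [htgtu, hsrc], x, hx, ?_⟩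
    rw [← S.mul_assoc' x b (C.lab e) hxb hbe, ← hxy]
    exact hyc

theorem Rmul_syncRegular (C : ChoiceOfReps S.toPreSgpd E) (hfin : Finite E)
    (hedge : ∀ e : E, SyncRegular C.etgt (relEdge C e)) (a : A) :
    SyncRegular C.etgt (Rmul C a) := by
  obtain ⟨w, hw, hwa⟩ := C.K_onto a
  obtain ⟨hwne, hwc⟩ := C.K_path w hw
  clear hw
  induction w using List.reverseRec generalizing a with
  | nil => exact absurd rfl hwne
  | append_singleton l e ih =>
    rcases eq_or_ne l [] with rfl | hl
    · have : C.lab e = a := Option.some_inj.mp hwa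
      rw [← this, Rmul_lab]
      exact hedge e
    · obtain ⟨b, hb⟩ := evalPath?_isSome S.toPreSgpd C.lab hl
      have hcl : IsPathChain C.esrc C.etgt l := (List.isChain_append.mp hwc).1
      have hlink : C.etgt (l.getLast hl) = C.esrc e := by
        have h3 := (List.isChain_append.mp hwc).2.2
        exact h3 (l.getLast hl) (List.getLast?_eq_getLast hl ▸ rfl) e rfl
      have hbe : S.tgt b = S.src (C.lab e) := by
        have h1 := tgt_eval C l hl hcl b hb
        rw [pathTgt?, List.getLast?_eq_getLast hl] at h1
        rw [← Option.some_inj.mp h1, hlink, C.lab_src]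
      have hab : a = S.mul b (C.lab e) := by
        have h2 := evalPath?_concat S.toPreSgpd C.lab e hb
        rw [hwa] at h2
        exact Option.some_inj.mp h2
      have h₁ : SyncRegular C.etgt (Rmul C b) := ih b hb hl hcl
      have h₂ : SyncRegular C.etgt (Rmul C (C.lab e)) := by
        rw [Rmul_lab]; exact hedge e
      have := RL.comp_syncRegular (E := E) (O := O) C.etgt
        (R₁ := Rmul C b) (R₂ := Rmul C (C.lab e)) h₁ h₂
      rw [hab, Rmul_comp C b e hbe]
      exact this

end SgpdLemmas


/-- Proposition 3.2 (prefix-automatic cross-section case). -/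
theorem stmt_3 {O A : Type} (S : Sgpd O A)
    (h : ∃ (E : Type) (C : ChoiceOfReps S.toPreSgpd E),
      IsPrefixAutomaticStructure C ∧ IsCrossSection C)
    (T : Set A) (hT : T.Finite) :
    ∃ (E : Type) (C : ChoiceOfReps S.toPreSgpd E),
      IsPrefixAutomaticStructure C ∧ IsCrossSection C ∧
      Function.Injective C.lab ∧ T ⊆ Set.range C.lab := by
  classical
  obtain ⟨E, C, ⟨hAuto, hPref⟩, hCS⟩ := h
  obtain ⟨hfinE, hKreg, hedge, hvert⟩ := hAuto
  haveI : Finite E := hfinE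
  have hT'fin : (Set.range C.lab ∪ T).Finite := (Set.finite_range C.lab).union hT
  haveI hfinE' : Finite {a : A // a ∈ Set.range C.lab ∪ T} := hT'fin.to_subtype
  set E' : Type := {a : A // a ∈ Set.range C.lab ∪ T} with hE'
  let g : E → E' := fun e => ⟨C.lab e, Or.inl ⟨e, rfl⟩⟩
  have hg_tgt : ∀ e, S.tgt (g e).val = C.etgt e := fun e => C.lab_tgt e
  have hg_src : ∀ e, S.src (g e).val = C.esrc e := fun e => C.lab_src e
  have heval : ∀ l : List E,
      evalPath? S.toPreSgpd (fun a : E' => a.val) (l.map g)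
        = evalPath? S.toPreSgpd C.lab l := fun l =>
    evalPath?_map S.toPreSgpd (fun a : E' => a.val) g l
  have hptgt : ∀ l : List E,
      pathTgt? (fun a : E' => S.tgt a.val) (l.map g) = pathTgt? C.etgt l :=
    pathTgt?_map g C.etgt (fun a : E' => S.tgt a.val) hg_tgt
  set C' : ChoiceOfReps S.toPreSgpd E' :=
    { esrc := fun a => S.src a.val
      etgt := fun a => S.tgt a.val
      lab := fun a => a.val
      lab_src := fun _ => rfl
      lab_tgt := fun _ => rfl
      K := (List.map g) '' C.K
      K_path := by
        rintro l' ⟨l, hl, rfl⟩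
        obtain ⟨hne, hch⟩ := C.K_path l hl
        refine ⟨by simpa using hne, ?_⟩
        rw [IsPathChain]; show List.IsChain _ (List.map g l); rw [List.isChain_map]
        exact hch.imp (fun a b hab => by rw [hg_tgt, hg_src]; exact hab)
      K_onto := by
        intro a
        obtain ⟨l, hl, he⟩ := C.K_onto a
        exact ⟨l.map g, ⟨l, hl, rfl⟩, by rw [heval]; exact he⟩ } with hC'
  have hrelEdge : ∀ a' : E', relEdge C' a'
      = (fun p : List E × List E => (p.1.map g, p.2.map g)) '' Rmul C a'.val := by
    intro a'
    ext ⟨u', v'⟩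
    constructor
    · rintro ⟨⟨u, hu, rfl⟩, ⟨v, hv, rfl⟩, htgt', hev'⟩
      obtain ⟨x, hx⟩ := evalPath?_isSome S.toPreSgpd C.lab (C.K_path u hu).1
      have hx' : evalPath? S.toPreSgpd C'.lab (u.map g) = some x := by
        rw [show C'.lab = (fun a : E' => a.val) from rfl, heval]; exact hx
      have hconc := evalPath?_concat S.toPreSgpd C'.lab a' hx'
      rw [hconc] at hev'
      have hev2 : evalPath? S.toPreSgpd C.lab v = some (S.mul x a'.val) := by
        rw [← heval v]; exact hev'.symm
      refine ⟨(u, v), ⟨hu, hv, ?_, x, hx, hev2⟩, rfl⟩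
      rw [← hptgt u]
      exact htgt'
    · rintro ⟨⟨u, v⟩, ⟨hu, hv, htgt, x, hx, hxa⟩, heq⟩
      obtain ⟨h1, h2⟩ : u.map g = u' ∧ v.map g = v' := by
        constructor
        · exact congrArg Prod.fst heq
        · exact congrArg Prod.snd heq
      subst h1; subst h2
      refine ⟨⟨u, hu, rfl⟩, ⟨v, hv, rfl⟩, ?_, ?_⟩
      · rw [show C'.esrc a' = S.src a'.val from rfl, hptgt u]
        exact htgt
      · have hx' : evalPath? S.toPreSgpd C'.lab (u.map g) = some x := by
          rw [show C'.lab = (fun a : E' => a.val) from rfl, heval]; exact hx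
        rw [evalPath?_concat S.toPreSgpd C'.lab a' hx']
        rw [show C'.lab = (fun a : E' => a.val) from rfl, heval]
        exact hxa.symm
  have hrelVert : ∀ v₀ : O, relVertex C' v₀
      = (fun p : List E × List E => (p.1.map g, p.2.map g)) '' relVertex C v₀ := by
    intro v₀
    ext ⟨u', v'⟩
    constructor
    · rintro ⟨⟨u, hu, rfl⟩, ⟨v, hv, rfl⟩, htgt', hev'⟩
      refine ⟨(u, v), ⟨hu, hv, ?_, ?_⟩, rfl⟩
      · rw [← hptgt u]; exact htgt'
      · rw [← heval u, ← heval v]; exact hev'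
    · rintro ⟨⟨u, v⟩, ⟨hu, hv, htgt, hev⟩, heq⟩
      obtain ⟨h1, h2⟩ : u.map g = u' ∧ v.map g = v' := by
        constructor
        · exact congrArg Prod.fst heq
        · exact congrArg Prod.snd heq
      subst h1; subst h2
      refine ⟨⟨u, hu, rfl⟩, ⟨v, hv, rfl⟩, ?_, ?_⟩
      · rw [show C'.etgt = (fun a : E' => S.tgt a.val) from rfl, hptgt u]; exact htgt
      · rw [show C'.lab = (fun a : E' => a.val) from rfl, heval, heval]; exact hev
  have hprefs : prefs C'.K = (List.map g) '' prefs C.K := by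
    ext p'
    constructor
    · rintro ⟨hne, l', ⟨l, hl, rfl⟩, hpre⟩
      have hp' : p' = (l.take p'.length).map g := by
        rw [List.map_take, ← List.prefix_iff_eq_take.mp hpre]
      refine ⟨l.take p'.length, ⟨?_, l, hl, List.take_prefix _ _⟩, hp'.symm⟩
      intro hnil
      rw [hnil] at hp'
      exact hne (by simpa using hp')
    · rintro ⟨p, ⟨hne, l, hl, hpre⟩, rfl⟩
      exact ⟨by simpa using hne, l.map g, ⟨l, hl, rfl⟩, hpre.map _⟩
  have hrelPref : relPrefEq C'
      = (fun p : List E × List E => (p.1.map g, p.2.map g)) '' relPrefEq C := by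
    ext ⟨u', v'⟩
    constructor
    · rintro ⟨⟨u, hu, rfl⟩, hv', hev'⟩
      rw [hprefs] at hv'
      obtain ⟨v, hv, rfl⟩ := hv'
      refine ⟨(u, v), ⟨hu, hv, ?_⟩, rfl⟩
      rw [← heval u, ← heval v]; exact hev'
    · rintro ⟨⟨u, v⟩, ⟨hu, hv, hev⟩, heq⟩
      obtain ⟨h1, h2⟩ : u.map g = u' ∧ v.map g = v' := by
        constructor
        · exact congrArg Prod.fst heq
        · exact congrArg Prod.snd heq
      subst h1; subst h2
      refine ⟨⟨u, hu, rfl⟩, ?_, ?_⟩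
      · rw [hprefs]; exact ⟨v, hv, rfl⟩
      · rw [show C'.lab = (fun a : E' => a.val) from rfl, heval, heval]; exact hev
  have himage : ∀ R : Set (List E × List E), SyncRegular C.etgt R →
      SyncRegular (fun a : E' => S.tgt a.val)
        ((fun p : List E × List E => (p.1.map g, p.2.map g)) '' R) := by
    intro R hR
    show IsRegularSet _
    rw [deltaLang_image g C.etgt (fun a : E' => S.tgt a.val) hg_tgt R]
    exact RL.image _ hR
  refine ⟨E', C', ⟨⟨hfinE', RL.image g hKreg, ?_, ?_⟩, ?_⟩, ?_, ?_, ?_⟩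
  · intro a'
    rw [show C'.etgt = (fun a : E' => S.tgt a.val) from rfl, hrelEdge a']
    exact himage _ (Rmul_syncRegular C hfinE hedge a'.val)
  · intro v₀
    rw [show C'.etgt = (fun a : E' => S.tgt a.val) from rfl, hrelVert v₀]
    exact himage _ (hvert v₀)
  · rw [show C'.etgt = (fun a : E' => S.tgt a.val) from rfl, hrelPref]
    exact himage _ hPref
  · rintro u' ⟨u, hu, rfl⟩ v' ⟨v, hv, rfl⟩ heq
    rw [show C'.lab = (fun a : E' => a.val) from rfl, heval, heval] at heq
    rw [hCS u hu v hv heq]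
  · intro a b hab
    exact Subtype.ext hab
  · intro t ht
    exact ⟨⟨t, Or.inr ht⟩, rfl⟩

end AutoRees
end

section
/- Let (X, K, sigma) be a regular choice of representatives for a semigroupoid S, and let L be a cofinite subset of K (that is, K \ L is finite). If the relation K_= ∩ (L × L) is synchronously regular, where K_= = {(u,v) ∈ K × K : u sigma = v sigma}, and for every edge c of X the relation K_c ∩ (L × K) is synchronously regular, where K_c = {(u,v) ∈ K × K : u omega = c alpha and (u c) sigma = v sigma}, then (X, K, sigma) is an automatic structure for S. -/
/- Common framework: graphs, path languages, synchronous regularity,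
   semigroupoids, automatic structures, and Rees matrix constructions. -/

namespace AutoRees

variable {O A E : Type} {S : PreSgpd O A}

noncomputable section
open Classical
set_option linter.dupNamespace false
set_option linter.unnecessarySeqFocus false



variable {β γ σ τ : Type}


theorem reg_empty : IsRegularSet (∅ : Set (List β)) :=
  ⟨Unit, inferInstance, ⟨fun _ _ => (), (), ∅⟩, by
    ext x
    exact iff_of_false (fun h => h) (fun h => h)⟩

def prodDFA (M : DFA β σ) (N : DFA β τ) (acc : Set (σ × τ)) : DFA β (σ × τ) :=
  ⟨fun p a => (M.step p.1 a, N.step p.2 a), (M.start, N.start), acc⟩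

theorem prodDFA_evalFrom (M : DFA β σ) (N : DFA β τ) (acc : Set (σ × τ))
    (s : σ) (t : τ) (x : List β) :
    (prodDFA M N acc).evalFrom (s, t) x = (M.evalFrom s x, N.evalFrom t x) := by
  induction x generalizing s t with
  | nil => rfl
  | cons a x ih => simpa [DFA.evalFrom, prodDFA] using ih _ _

theorem prodDFA_mem (M : DFA β σ) (N : DFA β τ) (acc : Set (σ × τ)) (x : List β) :
    x ∈ (prodDFA M N acc).accepts ↔ (M.eval x, N.eval x) ∈ acc := by
  rw [DFA.mem_accepts]
  have h : (prodDFA M N acc).eval x = (M.eval x, N.eval x) := prodDFA_evalFrom M N acc _ _ x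
  rw [h]
  exact Iff.rfl

theorem reg_union {L₁ L₂ : Set (List β)} (h₁ : IsRegularSet L₁) (h₂ : IsRegularSet L₂) :
    IsRegularSet (L₁ ∪ L₂) := by
  obtain ⟨σ, _, M, rfl⟩ := h₁
  obtain ⟨τ, _, N, rfl⟩ := h₂
  refine ⟨σ × τ, inferInstance, prodDFA M N {p | p.1 ∈ M.accept ∨ p.2 ∈ N.accept}, ?_⟩
  ext x
  rw [prodDFA_mem]
  exact Iff.rfl

theorem reg_inter {L₁ L₂ : Set (List β)} (h₁ : IsRegularSet L₁) (h₂ : IsRegularSet L₂) :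
    IsRegularSet (L₁ ∩ L₂) := by
  obtain ⟨σ, _, M, rfl⟩ := h₁
  obtain ⟨τ, _, N, rfl⟩ := h₂
  refine ⟨σ × τ, inferInstance, prodDFA M N {p | p.1 ∈ M.accept ∧ p.2 ∈ N.accept}, ?_⟩
  ext x
  rw [prodDFA_mem]
  exact Iff.rfl

def nilDFA (β : Type) : DFA β Bool := ⟨fun _ _ => false, true, {true}⟩

theorem nilDFA_false (y : List β) : (nilDFA β).evalFrom false y = false := by
  induction y <;> simp [DFA.evalFrom, nilDFA] at * <;> assumption

theorem reg_nil : IsRegularSet ({[]} : Set (List β)) := by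
  refine ⟨Bool, inferInstance, nilDFA β, ?_⟩
  ext x
  cases x with
  | nil => exact iff_of_true rfl rfl
  | cons a x =>
    refine iff_of_false (fun hmem => ?_) (fun h => List.cons_ne_nil a x h)
    have h2 : (nilDFA β).evalFrom true (a :: x) = false := nilDFA_false x
    have hmem' : (nilDFA β).evalFrom true (a :: x) ∈ ({true} : Set Bool) := hmem
    rw [h2] at hmem'
    simp at hmem'

def consDFA (a : β) (M : DFA β σ) : DFA β (Option (Option σ)) :=
  ⟨fun s b => match s with
      | some none => if b = a then some (some M.start) else none
      | some (some s) => some (some (M.step s b))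
      | none => none,
      some none, {s | ∃ t ∈ M.accept, s = some (some t)}⟩

theorem reg_cons (a : β) {L : Set (List β)} (h : IsRegularSet L) :
    IsRegularSet {x | ∃ t ∈ L, x = a :: t} := by
  obtain ⟨σ, _, M, rfl⟩ := h
  refine ⟨Option (Option σ), inferInstance, consDFA a M, ?_⟩
  have hnone : ∀ y, (consDFA a M).evalFrom none y = none := by
    intro y; induction y <;> simp [DFA.evalFrom, consDFA] at * <;> assumption
  have hsome : ∀ y s, (consDFA a M).evalFrom (some (some s)) y = some (some (M.evalFrom s y)) := by
    intro y; induction y with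
    | nil => intro s; rfl
    | cons b y ih => intro s; simpa [DFA.evalFrom, consDFA] using ih _
  ext x
  cases x with
  | nil =>
    show (consDFA a M).evalFrom (some none) [] ∈ (consDFA a M).accept ↔ _
    simp only [DFA.evalFrom_nil]
    constructor
    · rintro ⟨t, -, h⟩; simp [consDFA] at h
    · rintro ⟨t, -, h⟩; simp at h
  | cons b x =>
    have hstep : (consDFA a M).evalFrom (consDFA a M).start (b :: x)
        = (consDFA a M).evalFrom (if b = a then some (some M.start) else none) x := rfl
    show (consDFA a M).evalFrom (consDFA a M).start (b :: x) ∈ (consDFA a M).accept ↔ _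
    rw [hstep]
    by_cases hb : b = a
    · subst hb
      rw [if_pos rfl, hsome]
      constructor
      · rintro ⟨t, ht, h⟩
        simp only [consDFA, Set.mem_setOf_eq, Option.some.injEq] at h
        refine ⟨x, ?_, rfl⟩
        change M.evalFrom M.start x ∈ M.accept; rw [h]
        exact ht
      · rintro ⟨t, ht, h⟩
        obtain ⟨-, h2⟩ := List.cons_eq_cons.mp h
        subst h2
        exact ⟨M.eval x, by exact ht, rfl⟩
    · rw [if_neg hb, hnone]
      constructor
      · rintro ⟨t, -, h⟩; simp [consDFA] at h
      · rintro ⟨t, -, h⟩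
        obtain ⟨h1, -⟩ := List.cons_eq_cons.mp h
        exact absurd h1 hb

theorem reg_singleton (x : List β) : IsRegularSet ({x} : Set (List β)) := by
  induction x with
  | nil => exact reg_nil
  | cons a x ih =>
    have := reg_cons a ih
    convert this using 1
    ext y
    simp [eq_comm]

theorem reg_finite {L : Set (List β)} (h : L.Finite) : IsRegularSet L := by
  refine Set.Finite.induction_on (motive := fun s _ => IsRegularSet s) L h reg_empty ?_
  intro a s _ _ ih
  have he : insert a s = {a} ∪ s := by simp
  rw [he]
  exact reg_union (reg_singleton a) ih

theorem reg_biUnion {I : Type} {s : Set I} (hs : s.Finite) {f : I → Set (List β)}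
    (hf : ∀ i ∈ s, IsRegularSet (f i)) : IsRegularSet (⋃ i ∈ s, f i) := by
  revert hf
  refine Set.Finite.induction_on
    (motive := fun s _ => (∀ i ∈ s, IsRegularSet (f i)) → IsRegularSet (⋃ i ∈ s, f i)) s hs
    (fun _ => by simpa using reg_empty) ?_
  intro a t _ _ ih hf
  rw [Set.biUnion_insert]
  exact reg_union (hf a (Set.mem_insert _ _)) (ih fun i hi => hf i (Set.mem_insert_of_mem _ hi))

theorem reg_quot (p : List β) {L : Set (List β)} (h : IsRegularSet L) :
    IsRegularSet {t | p ++ t ∈ L} := by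
  obtain ⟨σ, _, M, rfl⟩ := h
  refine ⟨σ, inferInstance, ⟨M.step, M.eval p, M.accept⟩, ?_⟩
  ext t
  show DFA.evalFrom _ (M.eval p) t ∈ M.accept ↔ p ++ t ∈ M.accepts
  have he : (DFA.mk M.step (M.eval p) M.accept).evalFrom (M.eval p) t = M.evalFrom (M.eval p) t := rfl
  rw [he, DFA.mem_accepts, DFA.eval, DFA.evalFrom_of_append]

theorem reg_comap (g : β → γ) {L : Set (List γ)} (h : IsRegularSet L) :
    IsRegularSet {t | t.map g ∈ L} := by
  obtain ⟨σ, _, M, rfl⟩ := h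
  exact ⟨σ, inferInstance, M.comap g, by rw [DFA.accepts_comap]; rfl⟩

def allDFA (S : Set β) : DFA β Bool := ⟨fun s a => s && decide (a ∈ S), true, {true}⟩

theorem reg_allIn (S : Set β) : IsRegularSet {t : List β | ∀ a ∈ t, a ∈ S} := by
  refine ⟨Bool, inferInstance, allDFA S, ?_⟩
  have key : ∀ t, ((allDFA S).evalFrom true t = true ↔ ∀ a ∈ t, a ∈ S) ∧
      (allDFA S).evalFrom false t = false := by
    intro t; induction t with
    | nil => simp [DFA.evalFrom]
    | cons a t ih =>
      constructor
      · by_cases ha : a ∈ S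
        · have h1 : (allDFA S).evalFrom true (a :: t) = (allDFA S).evalFrom true t := by
            show (allDFA S).evalFrom ((allDFA S).step true a) t = _
            simp [allDFA, ha]
          rw [h1]
          simp only [List.mem_cons]
          constructor
          · intro h b hb; rcases hb with rfl | hb; exact ha; exact (ih.1).mp h b hb
          · intro h; exact (ih.1).mpr fun b hb => h b (Or.inr hb)
        · have h1 : (allDFA S).evalFrom true (a :: t) = (allDFA S).evalFrom false t := by
            show (allDFA S).evalFrom ((allDFA S).step true a) t = _
            simp [allDFA, ha]
          rw [h1, ih.2]
          simp only [List.mem_cons]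
          constructor
          · intro h; exact absurd h (by simp)
          · intro h; exact absurd (h a (Or.inl rfl)) ha
      · have h1 : (allDFA S).evalFrom false (a :: t) = (allDFA S).evalFrom false t := by
          show (allDFA S).evalFrom ((allDFA S).step false a) t = _
          simp [allDFA]
        rw [h1, ih.2]
  ext t
  show (allDFA S).evalFrom true t ∈ ({true} : Set Bool) ↔ _
  constructor
  · intro h; exact (key t).1.mp (by simpa using h)
  · intro h; have := (key t).1.mpr h; simp [this]

theorem reg_prepend (p : List β) {L : Set (List β)} (h : IsRegularSet L) :
    IsRegularSet {x | ∃ t ∈ L, x = p ++ t} := by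
  induction p with
  | nil => simpa using h
  | cons a p ih =>
    have := reg_cons a ih
    convert this using 1
    ext y
    constructor
    · rintro ⟨t, ht, rfl⟩; exact ⟨p ++ t, ⟨t, ht, rfl⟩, rfl⟩
    · rintro ⟨s, ⟨t, ht, rfl⟩, rfl⟩; exact ⟨t, ht, rfl⟩

theorem reg_mapImage (g : β → γ) (hg : Function.Injective g) [Nonempty β]
    {L : Set (List β)} (h : IsRegularSet L) :
    IsRegularSet {x | ∃ t ∈ L, x = t.map g} := by
  have hinv : ∀ b, Function.invFun g (g b) = b := fun b => Function.leftInverse_invFun hg b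
  have hreg := reg_inter (reg_allIn (Set.range g)) (reg_comap (Function.invFun g) h)
  convert hreg using 1
  ext x
  simp only [Set.mem_setOf_eq, Set.mem_inter_iff]
  constructor
  · rintro ⟨t, ht, rfl⟩
    refine ⟨fun a ha => by simp only [List.mem_map] at ha; obtain ⟨b, -, rfl⟩ := ha; exact ⟨b, rfl⟩, ?_⟩
    rw [List.map_map, show Function.invFun g ∘ g = id from funext hinv, List.map_id]
    exact ht
  · rintro ⟨hall, hmem⟩
    refine ⟨x.map (Function.invFun g), hmem, ?_⟩
    rw [List.map_map]
    rw [List.map_congr_left (fun a ha => ?_), List.map_id]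
    obtain ⟨b, rfl⟩ := hall a ha
    simp [Function.comp, hinv]

def lastDFA {E' : Type} (f : β → Option E') (S : Set (Option E')) : DFA β (Option E') :=
  ⟨fun s a => (f a).elim s some, none, S⟩

theorem lastDFA_evalFrom {E' : Type} (f : β → Option E') (S : Set (Option E'))
    (x : List β) (s : Option E') :
    (lastDFA f S).evalFrom s x = ((x.filterMap f).getLast?).elim s some := by
  induction x using List.reverseRecOn with
  | nil => rfl
  | append_singleton x a ih =>
    rw [DFA.evalFrom_append_singleton, ih, List.filterMap_append]
    have hstep : ∀ s', (lastDFA f S).step s' a = (f a).elim s' some := fun _ => rfl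
    rw [hstep]
    cases hfa : f a with
    | none => simp [List.filterMap_cons, hfa]
    | some e =>
      simp only [List.filterMap_cons, hfa, List.filterMap_nil]
      rw [List.getLast?_concat]
      rfl

theorem reg_lastFilter {E' : Type} [Finite E'] (f : β → Option E') (S : Set (Option E')) :
    IsRegularSet {x : List β | (x.filterMap f).getLast? ∈ S} := by
  have : Fintype E' := Fintype.ofFinite E'
  refine ⟨Option E', inferInstance, lastDFA f S, ?_⟩
  ext x
  show (lastDFA f S).evalFrom none x ∈ S ↔ _
  rw [lastDFA_evalFrom]
  have he : ∀ o : Option E', o.elim (none : Option E') some = o := by intro o; cases o <;> rfl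
  rw [he]
  exact Iff.rfl


/- ================= deltaPair lemmas ========= -/
section Delta

variable {V E : Type} (etgt : E → V)

theorem zip_trunc_left : ∀ (a : List α) (b : List β), a.zip b = (a.take b.length).zip b
  | [], _ => by simp
  | _ :: _, [] => by simp
  | x :: a, y :: b => by simp [List.zip_cons_cons, zip_trunc_left a b]

theorem zip_trunc_right : ∀ (a : List α) (b : List β), a.zip b = a.zip (b.take a.length)
  | [], _ => by simp
  | _ :: _, [] => by simp
  | x :: a, y :: b => by simp [List.zip_cons_cons, zip_trunc_right a b]

theorem fm_zip_fst : ∀ (a b : List E),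
    List.filterMap (fun q : (E ⊕ Option V) × (E ⊕ Option V) => q.1.getLeft?)
      ((a.map Sum.inl).zip (b.map Sum.inl)) = a.take b.length
  | [], _ => by simp
  | _ :: _, [] => by simp
  | x :: a, y :: b => by
    simp only [List.map_cons, List.zip_cons_cons, List.filterMap_cons, List.take_succ_cons]
    rw [fm_zip_fst a b]
    rfl

theorem fm_zip_snd : ∀ (a b : List E),
    List.filterMap (fun q : (E ⊕ Option V) × (E ⊕ Option V) => q.2.getLeft?)
      ((a.map Sum.inl).zip (b.map Sum.inl)) = b.take a.length
  | [], _ => by simp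
  | _ :: _, [] => by simp
  | x :: a, y :: b => by
    simp only [List.map_cons, List.zip_cons_cons, List.filterMap_cons, List.take_succ_cons]
    rw [fm_zip_snd a b]
    rfl

theorem fm_padl_fst (w l : List E) :
    List.filterMap (fun q : (E ⊕ Option V) × (E ⊕ Option V) => q.1.getLeft?)
      (l.map (fun e => (padSym etgt w, Sum.inl e))) = [] := by
  induction l with
  | nil => rfl
  | cons e l ih => simpa [List.filterMap_cons, padSym] using ih

theorem fm_padl_snd (w l : List E) :
    List.filterMap (fun q : (E ⊕ Option V) × (E ⊕ Option V) => q.2.getLeft?)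
      (l.map (fun e => (padSym etgt w, Sum.inl e))) = l := by
  induction l with
  | nil => rfl
  | cons e l ih => simpa [List.filterMap_cons] using ih

theorem fm_padr_fst (w l : List E) :
    List.filterMap (fun q : (E ⊕ Option V) × (E ⊕ Option V) => q.1.getLeft?)
      (l.map (fun e => (Sum.inl e, padSym etgt w))) = l := by
  induction l with
  | nil => rfl
  | cons e l ih => simpa [List.filterMap_cons] using ih

theorem fm_padr_snd (w l : List E) :
    List.filterMap (fun q : (E ⊕ Option V) × (E ⊕ Option V) => q.2.getLeft?)
      (l.map (fun e => (Sum.inl e, padSym etgt w))) = [] := by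
  induction l with
  | nil => rfl
  | cons e l ih => simpa [List.filterMap_cons, padSym] using ih

theorem deltaPair_fst (a b : List E) :
    (deltaPair etgt a b).filterMap (fun q => q.1.getLeft?) = a := by
  unfold deltaPair
  rw [List.filterMap_append]
  split_ifs with h
  · rw [fm_zip_fst, fm_padl_fst, List.append_nil, List.take_of_length_le h]
  · rw [fm_zip_fst, fm_padr_fst, List.take_append_drop]

theorem deltaPair_snd (a b : List E) :
    (deltaPair etgt a b).filterMap (fun q => q.2.getLeft?) = b := by
  unfold deltaPair
  rw [List.filterMap_append]
  split_ifs with h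
  · rw [fm_zip_snd, fm_padl_snd, List.take_append_drop]
  · push_neg at h
    rw [fm_zip_snd, fm_padr_snd, List.append_nil, List.take_of_length_le (le_of_lt h)]

theorem deltaPair_inj {a b a' b' : List E}
    (h : deltaPair etgt a b = deltaPair etgt a' b') : a = a' ∧ b = b' :=
  ⟨by rw [← deltaPair_fst etgt a b, h, deltaPair_fst],
   by rw [← deltaPair_snd etgt a b, h, deltaPair_snd]⟩

theorem deltaPair_eq_len {p w : List E} (hp : p.length = w.length) :
    deltaPair etgt w p = (w.map Sum.inl).zip (p.map Sum.inl) := by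
  unfold deltaPair
  rw [if_pos (le_of_eq hp.symm), List.drop_eq_nil_of_le (le_of_eq hp), List.map_nil,
    List.append_nil]

theorem deltaPair_append_right {p w : List E} (t : List E) (hp : p.length = w.length) :
    deltaPair etgt w (p ++ t)
      = deltaPair etgt w p ++ t.map (fun e => (padSym etgt w, Sum.inl e)) := by
  rw [deltaPair_eq_len etgt hp]
  unfold deltaPair
  rw [if_pos (by rw [List.length_append, ← hp]; omega)]
  have hzip : ((w.map (Sum.inl : E → E ⊕ Option V)).zip ((p ++ t).map (Sum.inl : E → E ⊕ Option V)))
      = (w.map (Sum.inl : E → E ⊕ Option V)).zip (p.map (Sum.inl : E → E ⊕ Option V)) := by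
    rw [zip_trunc_right, List.map_append, List.take_left' (by simp [hp])]
  rw [hzip, ← hp, List.drop_left]

theorem deltaPair_append_left {p w : List E} (t : List E) (hp : p.length = w.length) :
    deltaPair etgt (p ++ t) w
      = deltaPair etgt p w ++ t.map (fun e => (Sum.inl e, padSym etgt w)) := by
  cases t with
  | nil => simp
  | cons e t =>
    rw [deltaPair_eq_len etgt hp.symm]
    unfold deltaPair
    rw [if_neg (by rw [List.length_append, ← hp]; simp)]
    have hzip : (((p ++ e :: t).map (Sum.inl : E → E ⊕ Option V)).zip (w.map (Sum.inl : E → E ⊕ Option V)))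
        = (p.map (Sum.inl : E → E ⊕ Option V)).zip (w.map (Sum.inl : E → E ⊕ Option V)) := by
      rw [zip_trunc_left, List.map_append, List.take_left' (by simp [hp])]
    rw [hzip, ← hp, List.drop_left]

end Delta

/- ================= synchronous regularity lemmas ========= -/
section Sync

variable {V E : Type} {etgt : E → V}

theorem sync_union {R₁ R₂ : Set (List E × List E)}
    (h₁ : SyncRegular etgt R₁) (h₂ : SyncRegular etgt R₂) :
    SyncRegular etgt (R₁ ∪ R₂) := by
  have hset : {w | ∃ p ∈ R₁ ∪ R₂, w = deltaPair etgt p.1 p.2}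
      = {w | ∃ p ∈ R₁, w = deltaPair etgt p.1 p.2} ∪ {w | ∃ p ∈ R₂, w = deltaPair etgt p.1 p.2} := by
    ext x; constructor
    · rintro ⟨p, (hp | hp), rfl⟩
      exacts [Or.inl ⟨p, hp, rfl⟩, Or.inr ⟨p, hp, rfl⟩]
    · rintro (⟨p, hp, rfl⟩ | ⟨p, hp, rfl⟩)
      exacts [⟨p, Or.inl hp, rfl⟩, ⟨p, Or.inr hp, rfl⟩]
  show IsRegularSet _
  rw [hset]
  exact reg_union h₁ h₂

theorem sync_congr {R₁ R₂ : Set (List E × List E)} (h : R₁ = R₂)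
    (h₁ : SyncRegular etgt R₁) : SyncRegular etgt R₂ := h ▸ h₁

theorem sec_snd_regular [Finite E] {R : Set (List E × List E)} (h : SyncRegular etgt R)
    (w : List E) : IsRegularSet {v | (w, v) ∈ R} := by
  classical
  have hD : IsRegularSet {x | ∃ p ∈ R, x = deltaPair etgt p.1 p.2} := h
  have hmem : ∀ v, (w, v) ∈ R ↔
      deltaPair etgt w v ∈ {x | ∃ p ∈ R, x = deltaPair etgt p.1 p.2} := by
    intro v
    constructor
    · intro hv; exact ⟨(w, v), hv, rfl⟩
    · rintro ⟨p, hp, heq⟩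
      obtain ⟨h1, h2⟩ := deltaPair_inj etgt heq
      rw [h1, h2]; exact hp
  have hset : {v | (w, v) ∈ R} =
      {v : List E | v.length < w.length ∧ (w, v) ∈ R} ∪
      ⋃ p ∈ {p : List E | p.length = w.length},
        {x | ∃ t ∈ {t : List E | (deltaPair etgt w p ++
            t.map (fun e => (padSym etgt w, Sum.inl e))) ∈
            {x | ∃ q ∈ R, x = deltaPair etgt q.1 q.2}}, x = p ++ t} := by
    ext v
    constructor
    · intro hv
      by_cases hlen : v.length < w.length
      · exact Or.inl ⟨hlen, hv⟩
      · push_neg at hlen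
        refine Or.inr (Set.mem_biUnion (show (v.take w.length).length = w.length by
          simp [List.length_take]; omega) ?_)
        refine ⟨v.drop w.length, ?_, (List.take_append_drop ..).symm⟩
        show _ ∈ {x | ∃ q ∈ R, x = deltaPair etgt q.1 q.2}
        rw [← deltaPair_append_right etgt _ (by simp [List.length_take]; omega),
          List.take_append_drop]
        exact (hmem v).mp hv
    · rintro (⟨-, hv⟩ | hv)
      · exact hv
      · simp only [Set.mem_iUnion, Set.mem_setOf_eq] at hv
        obtain ⟨p, hp, t, ht, rfl⟩ := hv
        apply (hmem _).mpr
        rw [deltaPair_append_right etgt _ hp]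
        exact ht
  rw [hset]
  refine reg_union (reg_finite ((List.finite_length_lt E w.length).subset fun v hv => hv.1)) ?_
  refine reg_biUnion (List.finite_length_eq E w.length) ?_
  intro p _
  exact reg_prepend p
    (reg_comap (fun e => (padSym etgt w, Sum.inl e)) (reg_quot (deltaPair etgt w p) hD))

theorem sec_fst_regular [Finite E] {R : Set (List E × List E)} (h : SyncRegular etgt R)
    (w : List E) : IsRegularSet {u | (u, w) ∈ R} := by
  classical
  have hD : IsRegularSet {x | ∃ p ∈ R, x = deltaPair etgt p.1 p.2} := h
  have hmem : ∀ u, (u, w) ∈ R ↔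
      deltaPair etgt u w ∈ {x | ∃ p ∈ R, x = deltaPair etgt p.1 p.2} := by
    intro u
    constructor
    · intro hu; exact ⟨(u, w), hu, rfl⟩
    · rintro ⟨p, hp, heq⟩
      obtain ⟨h1, h2⟩ := deltaPair_inj etgt heq
      rw [h1, h2]; exact hp
  have hset : {u | (u, w) ∈ R} =
      {u : List E | u.length < w.length ∧ (u, w) ∈ R} ∪
      ⋃ p ∈ {p : List E | p.length = w.length},
        {x | ∃ t ∈ {t : List E | (deltaPair etgt p w ++
            t.map (fun e => (Sum.inl e, padSym etgt w))) ∈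
            {x | ∃ q ∈ R, x = deltaPair etgt q.1 q.2}}, x = p ++ t} := by
    ext u
    constructor
    · intro hu
      by_cases hlen : u.length < w.length
      · exact Or.inl ⟨hlen, hu⟩
      · push_neg at hlen
        refine Or.inr (Set.mem_biUnion (show (u.take w.length).length = w.length by
          simp [List.length_take]; omega) ?_)
        refine ⟨u.drop w.length, ?_, (List.take_append_drop ..).symm⟩
        show _ ∈ {x | ∃ q ∈ R, x = deltaPair etgt q.1 q.2}
        rw [← deltaPair_append_left etgt _ (by simp [List.length_take]; omega),
          List.take_append_drop]
        exact (hmem u).mp hu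
    · rintro (⟨-, hu⟩ | hu)
      · exact hu
      · simp only [Set.mem_iUnion, Set.mem_setOf_eq] at hu
        obtain ⟨p, hp, t, ht, rfl⟩ := hu
        apply (hmem _).mpr
        rw [deltaPair_append_left etgt _ hp]
        exact ht
  rw [hset]
  refine reg_union (reg_finite ((List.finite_length_lt E w.length).subset fun v hv => hv.1)) ?_
  refine reg_biUnion (List.finite_length_eq E w.length) ?_
  intro p _
  exact reg_prepend p
    (reg_comap (fun e => (Sum.inl e, padSym etgt w)) (reg_quot (deltaPair etgt p w) hD))

theorem img_fst_regular [Finite E] {Vset : Set (List E)} (hV : IsRegularSet Vset)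
    {u : List E} (hu : u ≠ []) :
    IsRegularSet {x | ∃ v ∈ Vset, x = deltaPair etgt u v} := by
  classical
  have hne : Nonempty E := ⟨u.head hu⟩
  have hset : {x | ∃ v ∈ Vset, x = deltaPair etgt u v} =
      ((fun v => deltaPair etgt u v) '' {v | v ∈ Vset ∧ v.length < u.length}) ∪
      ⋃ p ∈ {p : List E | p.length = u.length},
        {x | ∃ s ∈ {s | ∃ t ∈ {t : List E | p ++ t ∈ Vset},
            s = t.map (fun e => (padSym etgt u, Sum.inl e))},
          x = deltaPair etgt u p ++ s} := by
    ext x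
    constructor
    · rintro ⟨v, hv, rfl⟩
      by_cases hlen : v.length < u.length
      · exact Or.inl ⟨v, ⟨hv, hlen⟩, rfl⟩
      · push_neg at hlen
        refine Or.inr (Set.mem_biUnion (show (v.take u.length).length = u.length by
          simp [List.length_take]; omega) ?_)
        refine ⟨(v.drop u.length).map (fun e => (padSym etgt u, Sum.inl e)),
          ⟨v.drop u.length, ?_, rfl⟩, ?_⟩
        · show _ ++ _ ∈ Vset
          rw [List.take_append_drop]
          exact hv
        · rw [← deltaPair_append_right etgt _ (by simp [List.length_take]; omega),
            List.take_append_drop]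
    · rintro (⟨v, ⟨hv, -⟩, rfl⟩ | hx)
      · exact ⟨v, hv, rfl⟩
      · simp only [Set.mem_iUnion, Set.mem_setOf_eq] at hx
        obtain ⟨p, hp, s, ⟨t, ht, rfl⟩, rfl⟩ := hx
        exact ⟨p ++ t, ht, by rw [deltaPair_append_right etgt _ hp]⟩
  rw [hset]
  refine reg_union (reg_finite (Set.Finite.image _
    ((List.finite_length_lt E u.length).subset fun v hv => hv.2))) ?_
  refine reg_biUnion (List.finite_length_eq E u.length) ?_
  intro p _
  refine reg_prepend _ ?_
  exact reg_mapImage _ (fun a b hab => Sum.inl_injective (congrArg Prod.snd hab))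
    (reg_quot p hV)

theorem img_snd_regular [Finite E] {Uset : Set (List E)} (hU : IsRegularSet Uset)
    {w : List E} (hw : w ≠ []) :
    IsRegularSet {x | ∃ u ∈ Uset, x = deltaPair etgt u w} := by
  classical
  have hne : Nonempty E := ⟨w.head hw⟩
  have hset : {x | ∃ u ∈ Uset, x = deltaPair etgt u w} =
      ((fun u => deltaPair etgt u w) '' {u | u ∈ Uset ∧ u.length < w.length}) ∪
      ⋃ p ∈ {p : List E | p.length = w.length},
        {x | ∃ s ∈ {s | ∃ t ∈ {t : List E | p ++ t ∈ Uset},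
            s = t.map (fun e => (Sum.inl e, padSym etgt w))},
          x = deltaPair etgt p w ++ s} := by
    ext x
    constructor
    · rintro ⟨v, hv, rfl⟩
      by_cases hlen : v.length < w.length
      · exact Or.inl ⟨v, ⟨hv, hlen⟩, rfl⟩
      · push_neg at hlen
        refine Or.inr (Set.mem_biUnion (show (v.take w.length).length = w.length by
          simp [List.length_take]; omega) ?_)
        refine ⟨(v.drop w.length).map (fun e => (Sum.inl e, padSym etgt w)),
          ⟨v.drop w.length, ?_, rfl⟩, ?_⟩
        · show _ ++ _ ∈ Uset
          rw [List.take_append_drop]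
          exact hv
        · rw [← deltaPair_append_left etgt _ (by simp [List.length_take]; omega),
            List.take_append_drop]
    · rintro (⟨v, ⟨hv, -⟩, rfl⟩ | hx)
      · exact ⟨v, hv, rfl⟩
      · simp only [Set.mem_iUnion, Set.mem_setOf_eq] at hx
        obtain ⟨p, hp, s, ⟨t, ht, rfl⟩, rfl⟩ := hx
        exact ⟨p ++ t, ht, by rw [deltaPair_append_left etgt _ hp]⟩
  rw [hset]
  refine reg_union (reg_finite (Set.Finite.image _
    ((List.finite_length_lt E w.length).subset fun v hv => hv.2))) ?_
  refine reg_biUnion (List.finite_length_eq E w.length) ?_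
  intro p _
  refine reg_prepend _ ?_
  exact reg_mapImage _ (fun a b hab => Sum.inl_injective (congrArg Prod.fst hab))
    (reg_quot p hU)

theorem sync_of_fst_finite [Finite E] {R : Set (List E × List E)} {F : Set (List E)}
    (hF : F.Finite) (hne : ∀ u ∈ F, u ≠ []) (hsub : ∀ p ∈ R, p.1 ∈ F)
    (hsec : ∀ u ∈ F, IsRegularSet {v | (u, v) ∈ R}) : SyncRegular etgt R := by
  have hset : {x | ∃ p ∈ R, x = deltaPair etgt p.1 p.2}
      = ⋃ u ∈ F, {x | ∃ v ∈ {v | (u, v) ∈ R}, x = deltaPair etgt u v} := by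
    ext x
    constructor
    · rintro ⟨⟨a, b⟩, hp, rfl⟩
      exact Set.mem_biUnion (hsub _ hp) ⟨b, hp, rfl⟩
    · intro hx
      simp only [Set.mem_iUnion, Set.mem_setOf_eq] at hx
      obtain ⟨a, -, b, hb, rfl⟩ := hx
      exact ⟨(a, b), hb, rfl⟩
  show IsRegularSet _
  rw [hset]
  exact reg_biUnion hF fun a ha => img_fst_regular (hsec a ha) (hne a ha)

theorem sync_of_snd_finite [Finite E] {R : Set (List E × List E)} {F : Set (List E)}
    (hF : F.Finite) (hne : ∀ u ∈ F, u ≠ []) (hsub : ∀ p ∈ R, p.2 ∈ F)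
    (hsec : ∀ w ∈ F, IsRegularSet {u | (u, w) ∈ R}) : SyncRegular etgt R := by
  have hset : {x | ∃ p ∈ R, x = deltaPair etgt p.1 p.2}
      = ⋃ w ∈ F, {x | ∃ u ∈ {u | (u, w) ∈ R}, x = deltaPair etgt u w} := by
    ext x
    constructor
    · rintro ⟨⟨a, b⟩, hp, rfl⟩
      exact Set.mem_biUnion (hsub _ hp) ⟨a, hp, rfl⟩
    · intro hx
      simp only [Set.mem_iUnion, Set.mem_setOf_eq] at hx
      obtain ⟨b, -, a, ha, rfl⟩ := hx
      exact ⟨(a, b), ha, rfl⟩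
  show IsRegularSet _
  rw [hset]
  exact reg_biUnion hF fun b hb => img_snd_regular (hsec b hb) (hne b hb)

end Sync

/- ================= main theorem ========= -/

/-- Lemma 3.3: to verify automaticity of a regular choice of representatives it
suffices to check synchronous regularity on a cofinite sublanguage `L` of `K`. -/
theorem stmt_4 {O A E : Type} (S : Sgpd O A) (C : ChoiceOfReps S.toPreSgpd E)
    (hfin : Finite E) (hreg : IsRegularSet C.K)
    (L : Set (List E)) (hL : L ⊆ C.K) (hcofin : (C.K \ L).Finite)
    (hEq : SyncRegular C.etgt { p | p ∈ relEq C ∧ p.1 ∈ L ∧ p.2 ∈ L })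
    (hEdge : ∀ c : E, SyncRegular C.etgt { p | p ∈ relEdge C c ∧ p.1 ∈ L }) :
    IsAutomaticStructure C := by
  classical
  have hKne : ∀ u ∈ C.K, u ≠ [] := fun u hu => (C.K_path u hu).1
  -- the fiber over `a` inside `L` is regular
  have hfiberL : ∀ a : Option A, IsRegularSet
      {v : List E | v ∈ L ∧ evalPath? S.toPreSgpd C.lab v = a} := by
    intro a
    by_cases hw : ∃ w ∈ L, evalPath? S.toPreSgpd C.lab w = a
    · obtain ⟨w, hwL, hwa⟩ := hw
      have hsec := sec_snd_regular hEq w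
      have heqset : {v : List E | v ∈ L ∧ evalPath? S.toPreSgpd C.lab v = a}
          = {v | (w, v) ∈ {p : List E × List E | p ∈ relEq C ∧ p.1 ∈ L ∧ p.2 ∈ L}} := by
        ext v
        simp only [Set.mem_setOf_eq, relEq]
        constructor
        · rintro ⟨hvL, he⟩
          exact ⟨⟨hL hwL, hL hvL, by rw [hwa, he]⟩, hwL, hvL⟩
        · rintro ⟨⟨-, -, he⟩, -, hvL⟩
          exact ⟨hvL, by rw [← he, hwa]⟩
      rw [heqset]
      exact hsec
    · have hempty : {v : List E | v ∈ L ∧ evalPath? S.toPreSgpd C.lab v = a} = ∅ := by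
        ext v
        simp only [Set.mem_setOf_eq, Set.mem_empty_iff_false, iff_false, not_and]
        intro h1 h2
        exact hw ⟨v, h1, h2⟩
      rw [hempty]
      exact reg_empty
  -- the fiber over `a` inside `K` is regular
  have hfiberK : ∀ a : Option A, IsRegularSet
      {v : List E | v ∈ C.K ∧ evalPath? S.toPreSgpd C.lab v = a} := by
    intro a
    have hsplit : {v : List E | v ∈ C.K ∧ evalPath? S.toPreSgpd C.lab v = a}
        = {v : List E | v ∈ L ∧ evalPath? S.toPreSgpd C.lab v = a}
          ∪ {v : List E | v ∈ C.K \ L ∧ evalPath? S.toPreSgpd C.lab v = a} := by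
      ext u
      constructor
      · rintro ⟨hu, he⟩
        by_cases huL : u ∈ L
        · exact Or.inl ⟨huL, he⟩
        · exact Or.inr ⟨⟨hu, huL⟩, he⟩
      · rintro (⟨hu, he⟩ | ⟨hu, he⟩)
        · exact ⟨hL hu, he⟩
        · exact ⟨hu.1, he⟩
    rw [hsplit]
    exact reg_union (hfiberL a) (reg_finite (hcofin.subset fun u hu => hu.1))
  -- the target-condition language over `E` is regular
  have htgt : ∀ vO : O, IsRegularSet {u : List E | pathTgt? C.etgt u = some vO} := by
    intro vO
    have hlf := reg_lastFilter (β := E) (some : E → Option E)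
      {o : Option E | o.map C.etgt = some vO}
    convert hlf using 1
    ext u
    simp [pathTgt?, List.filterMap_some]
  refine ⟨hfin, hreg, ?_, ?_⟩
  · -- edges
    intro c
    have hsplit : relEdge C c = {p | p ∈ relEdge C c ∧ p.1 ∈ L}
        ∪ {p | p ∈ relEdge C c ∧ p.1 ∈ C.K \ L} := by
      ext p
      constructor
      · intro hp
        by_cases h1 : p.1 ∈ L
        · exact Or.inl ⟨hp, h1⟩
        · exact Or.inr ⟨hp, hp.1, h1⟩
      · rintro (⟨hp, -⟩ | ⟨hp, -⟩) <;> exact hp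
    rw [hsplit]
    refine sync_union (hEdge c) ?_
    refine sync_of_fst_finite hcofin (fun u hu => hKne u hu.1) (fun p hp => hp.2) ?_
    intro u hu
    by_cases hcond : pathTgt? C.etgt u = some (C.esrc c)
    · have hsec : {v | (u, v) ∈ {p : List E × List E | p ∈ relEdge C c ∧ p.1 ∈ C.K \ L}}
          = {v : List E | v ∈ C.K ∧
              evalPath? S.toPreSgpd C.lab v = evalPath? S.toPreSgpd C.lab (u ++ [c])} := by
        ext w
        simp only [Set.mem_setOf_eq, relEdge]
        constructor
        · rintro ⟨⟨-, hwK, -, he⟩, -⟩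
          exact ⟨hwK, he.symm⟩
        · rintro ⟨hwK, he⟩
          exact ⟨⟨hu.1, hwK, hcond, he.symm⟩, hu⟩
      rw [hsec]
      exact hfiberK _
    · have hsec : {v | (u, v) ∈ {p : List E × List E | p ∈ relEdge C c ∧ p.1 ∈ C.K \ L}}
          = (∅ : Set (List E)) := by
        ext w
        simp only [Set.mem_setOf_eq, relEdge, Set.mem_empty_iff_false, iff_false]
        rintro ⟨⟨-, -, hc, -⟩, -⟩
        exact hcond hc
      rw [hsec]
      exact reg_empty
  · -- vertices
    intro v
    have hsplit : relVertex C v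
        = ({p : List E × List E | (p ∈ relEq C ∧ p.1 ∈ L ∧ p.2 ∈ L)
              ∧ pathTgt? C.etgt p.1 = some v}
          ∪ ({p : List E × List E | p ∈ relVertex C v ∧ p.1 ∈ C.K \ L}
          ∪ {p : List E × List E | p ∈ relVertex C v ∧ p.2 ∈ C.K \ L})) := by
      ext p
      constructor
      · intro hp
        obtain ⟨h1, h2, h3, h4⟩ := hp
        by_cases hp1 : p.1 ∈ L
        · by_cases hp2 : p.2 ∈ L
          · exact Or.inl ⟨⟨⟨h1, h2, h4⟩, hp1, hp2⟩, h3⟩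
          · exact Or.inr (Or.inr ⟨⟨h1, h2, h3, h4⟩, h2, hp2⟩)
        · exact Or.inr (Or.inl ⟨⟨h1, h2, h3, h4⟩, h1, hp1⟩)
      · rintro (⟨⟨⟨hK1, hK2, heq⟩, -, -⟩, htv⟩ | (⟨hp, -⟩ | ⟨hp, -⟩))
        · exact ⟨hK1, hK2, htv, heq⟩
        · exact hp
        · exact hp
    rw [hsplit]
    refine sync_union ?_ (sync_union ?_ ?_)
    · -- both coordinates in L : use hEq intersected with target condition
      have hTv : IsRegularSet {x : List ((E ⊕ Option O) × (E ⊕ Option O)) |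
          (x.filterMap (fun q => q.1.getLeft?)).getLast?
            ∈ {o : Option E | o.map C.etgt = some v}} :=
        reg_lastFilter _ _
      show IsRegularSet _
      have hset : {x | ∃ p ∈ {p : List E × List E | (p ∈ relEq C ∧ p.1 ∈ L ∧ p.2 ∈ L)
            ∧ pathTgt? C.etgt p.1 = some v}, x = deltaPair C.etgt p.1 p.2}
          = {x | ∃ p ∈ {p : List E × List E | p ∈ relEq C ∧ p.1 ∈ L ∧ p.2 ∈ L},
              x = deltaPair C.etgt p.1 p.2}
            ∩ {x : List ((E ⊕ Option O) × (E ⊕ Option O)) |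
              (x.filterMap (fun q => q.1.getLeft?)).getLast?
                ∈ {o : Option E | o.map C.etgt = some v}} := by
        ext x
        constructor
        · rintro ⟨p, ⟨hp, htv⟩, rfl⟩
          refine ⟨⟨p, hp, rfl⟩, ?_⟩
          simp only [Set.mem_setOf_eq]
          rw [deltaPair_fst]
          exact htv
        · rintro ⟨⟨p, hp, rfl⟩, htv⟩
          refine ⟨p, ⟨hp, ?_⟩, rfl⟩
          have h2 := htv
          rw [Set.mem_setOf_eq, deltaPair_fst] at h2
          exact h2
      rw [hset]
      exact reg_inter hEq hTv
    · -- first coordinate in the finite set K \ L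
      refine sync_of_fst_finite hcofin (fun u hu => hKne u hu.1) (fun p hp => hp.2) ?_
      intro u hu
      by_cases hcond : pathTgt? C.etgt u = some v
      · have hsec : {w | (u, w) ∈ {p : List E × List E | p ∈ relVertex C v ∧ p.1 ∈ C.K \ L}}
            = {w : List E | w ∈ C.K ∧
                evalPath? S.toPreSgpd C.lab w = evalPath? S.toPreSgpd C.lab u} := by
          ext w
          simp only [Set.mem_setOf_eq, relVertex]
          constructor
          · rintro ⟨⟨-, hwK, -, he⟩, -⟩
            exact ⟨hwK, he.symm⟩
          · rintro ⟨hwK, he⟩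
            exact ⟨⟨hu.1, hwK, hcond, he.symm⟩, hu⟩
        rw [hsec]
        exact hfiberK _
      · have hsec : {w | (u, w) ∈ {p : List E × List E | p ∈ relVertex C v ∧ p.1 ∈ C.K \ L}}
            = (∅ : Set (List E)) := by
          ext w
          simp only [Set.mem_setOf_eq, relVertex, Set.mem_empty_iff_false, iff_false]
          rintro ⟨⟨-, -, hc, -⟩, -⟩
          exact hcond hc
        rw [hsec]
        exact reg_empty
    · -- second coordinate in the finite set K \ L
      refine sync_of_snd_finite hcofin (fun u hu => hKne u hu.1) (fun p hp => hp.2) ?_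
      intro w hw
      have hsec : {u | (u, w) ∈ {p : List E × List E | p ∈ relVertex C v ∧ p.2 ∈ C.K \ L}}
          = {u : List E | u ∈ C.K ∧
              evalPath? S.toPreSgpd C.lab u = evalPath? S.toPreSgpd C.lab w}
            ∩ {u : List E | pathTgt? C.etgt u = some v} := by
        ext u
        simp only [Set.mem_setOf_eq, relVertex, Set.mem_inter_iff]
        constructor
        · rintro ⟨⟨huK, -, hc, he⟩, -⟩
          exact ⟨⟨huK, he⟩, hc⟩
        · rintro ⟨⟨huK, he⟩, hc⟩
          exact ⟨⟨huK, hw.1, hc, he⟩, hw⟩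
      rw [hsec]
      exact reg_inter (hfiberK _) (htgt v)


end
end AutoRees
end
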